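/- arXiv:2601.16879 — 7 statements merged into one kernel-verified Lean document; each statement's English description precedes it below -/
import Mathlib

section
/- Let n ≥ 2 and let A be a diagonal n×n matrix with diagonal entries β₁₁,…,βₙₙ ∈ (0,1). Then, in ℝⁿ with the sup metric, there exist nonempty compact sets C₁, C₂ ⊆ B[0,1] such that neither of C₁, C₂ is contained in a single connected component of the complement of the other, τ_A(C₁) + τ_A(C₂) > 0, and C₁ ∩ C₂ = ∅. -/
open Metric Set Topology Filter
open scoped ENNReal Classical

noncomputable section

/-- The affine box `A^s(B[0,1]) + z`, where `A` is the diagonal matrix with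
diagonal entries `β j`, so `A^s(B[0,1]) + z = {x : |x j - z j| ≤ (β j)^s for all j}`. -/
def affBox {n : ℕ} (β : Fin n → ℝ) (s : ℝ) (z : Fin n → ℝ) : Set (Fin n → ℝ) :=
  {x | ∀ j, |x j - z j| ≤ (β j) ^ s}

/-- The size `S_A(F)` of `F` with respect to the diagonal matrix with entries `β`. -/
def sizeWrt {n : ℕ} (β : Fin n → ℝ) (F : Set (Fin n → ℝ)) : ℝ :=
  sInf {t | 0 < t ∧ ∃ z, F ⊆ affBox β (1 / t) z}

/-- `G` is a gap (a connected component of the complement) of `C`. -/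
def IsGap {n : ℕ} (C G : Set (Fin n → ℝ)) : Prop :=
  ∃ x ∈ Cᶜ, G = connectedComponentIn Cᶜ x

/-- `G` is a bounded gap of `C`. -/
def IsBoundedGap {n : ℕ} (C G : Set (Fin n → ℝ)) : Prop :=
  IsGap C G ∧ Bornology.IsBounded G

/-- The unbounded gap `E` of `C`: the union of the unbounded connected
components of the complement of `C`. -/
def unboundedGap {n : ℕ} (C : Set (Fin n → ℝ)) : Set (Fin n → ℝ) :=
  {x | x ∈ Cᶜ ∧ ¬ Bornology.IsBounded (connectedComponentIn Cᶜ x)}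

/-- An enumeration `(G_k)_{k ∈ J}` of the bounded gaps of `C`, in non-increasing
order of size with respect to `β`. -/
structure GapEnum {n : ℕ} (β : Fin n → ℝ) (C : Set (Fin n → ℝ)) where
  J : Set ℕ
  G : ℕ → Set (Fin n → ℝ)
  downward : ∀ k l : ℕ, k ≤ l → l ∈ J → k ∈ J
  isGap : ∀ k ∈ J, IsBoundedGap C (G k)
  inj : ∀ k ∈ J, ∀ l ∈ J, G k = G l → k = l
  surj : ∀ G', IsBoundedGap C G' → ∃ k ∈ J, G k = G'
  anti : ∀ k ∈ J, ∀ l ∈ J, k ≤ l → sizeWrt β (G l) ≤ sizeWrt β (G k)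

/-- The gap distance `GD_A(m, C)` with respect to the enumeration `e`. -/
def gapDist {n : ℕ} (β : Fin n → ℝ) (C : Set (Fin n → ℝ)) (e : GapEnum β C) (m : ℕ) : ℝ :=
  sInf {t | 0 < t ∧ ∃ z, (affBox β (1 / t) z ∩ e.G m).Nonempty ∧
    (affBox β (1 / t) z ∩ ((⋃ i ∈ e.J ∩ Iio m, e.G i) ∪ unboundedGap C)).Nonempty}

/-- Extended-real-valued inverse, with `0⁻¹ = ∞`. -/
def invE (s : ℝ) : EReal := if s = 0 then ⊤ else ((s⁻¹ : ℝ) : EReal)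

/-- Affine thickness `τ_A(C)` of `C` with respect to the diagonal matrix with entries `β`,
computed from the enumeration `e` of the bounded gaps of `C`. -/
def thicknessA {n : ℕ} (β : Fin n → ℝ) (C : Set (Fin n → ℝ)) (e : GapEnum β C) : EReal :=
  if e.J = ∅ then (if (interior C).Nonempty then ⊤ else ⊥)
  else if ∃ k ∈ e.J, gapDist β C e k = 0 then ⊥
  else ⨅ k ∈ e.J, (invE (sizeWrt β (e.G k)) - invE (gapDist β C e k))

/-- Open sets `U`, `V` are linked. -/
def Linked {n : ℕ} (U V : Set (Fin n → ℝ)) : Prop :=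
  (U ∩ V).Nonempty ∧ (frontier U \ V).Nonempty ∧ (frontier V \ U).Nonempty

/-- Compact sets `C₁`, `C₂` are BG linked. -/
def BGLinked {n : ℕ} (C₁ C₂ : Set (Fin n → ℝ)) : Prop :=
  ∀ G₁ G₂, IsBoundedGap C₁ G₁ → IsBoundedGap C₂ G₂ → Linked G₁ G₂ ∨ G₁ ∩ G₂ = ∅

/-- `C₁, C₂ ⊆ B[0,1]` are a strongly refinable pair for the diagonal matrix with entries `β`. -/
def StronglyRefinable {n : ℕ} (β : Fin n → ℝ) (C₁ C₂ : Set (Fin n → ℝ)) : Prop :=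
  ∃ C₁' C₂' : Set (Fin n → ℝ), IsCompact C₁' ∧ IsCompact C₂' ∧
    C₁' ⊆ closedBall 0 1 ∧ C₂' ⊆ closedBall 0 1 ∧
    BGLinked C₁' C₂' ∧
    (∃ G₁, IsBoundedGap C₁' G₁ ∧ ¬ frontier G₁ ⊆ unboundedGap C₂') ∧
    (∃ G₂, IsBoundedGap C₂' G₂ ∧ ¬ frontier G₂ ⊆ unboundedGap C₁') ∧
    (∀ e₁ : GapEnum β C₁, ∀ e₂ : GapEnum β C₂, ∃ e₁' : GapEnum β C₁', ∃ e₂' : GapEnum β C₂',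
      thicknessA β C₁ e₁ + thicknessA β C₂ e₂ ≤ thicknessA β C₁' e₁' + thicknessA β C₂' e₂') ∧
    C₁' ∩ C₂' ⊆ C₁ ∩ C₂

/-- The distance between two sets. -/
def setDist {n : ℕ} (A B : Set (Fin n → ℝ)) : ℝ :=
  sInf {r | ∃ a ∈ A, ∃ b ∈ B, r = dist a b}

/-- An enumeration of the bounded gaps of `C` in non-increasing order of diameter. -/
structure DiamEnum {n : ℕ} (C : Set (Fin n → ℝ)) where
  J : Set ℕ
  G : ℕ → Set (Fin n → ℝ)
  downward : ∀ k l : ℕ, k ≤ l → l ∈ J → k ∈ J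
  isGap : ∀ k ∈ J, IsBoundedGap C (G k)
  inj : ∀ k ∈ J, ∀ l ∈ J, G k = G l → k = l
  surj : ∀ G', IsBoundedGap C G' → ∃ k ∈ J, G k = G'
  anti : ∀ k ∈ J, ∀ l ∈ J, k ≤ l → Metric.diam (G l) ≤ Metric.diam (G k)

/-- The Falconer–Yavicoli thickness `τ(C)`, computed from the enumeration `e` of
the bounded gaps of `C` in non-increasing order of diameter. -/
def FYthickness {n : ℕ} (C : Set (Fin n → ℝ)) (e : DiamEnum C) : ℝ≥0∞ :=
  if e.J = ∅ then (if (interior C).Nonempty then ⊤ else 0)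
  else ⨅ k ∈ e.J, ENNReal.ofReal
    (setDist (e.G k) (unboundedGap C ∪ ⋃ j ∈ e.J ∩ Iio k, e.G j) / Metric.diam (e.G k))

end

/-!
Each set is a sup-metric shell `closedBall p (1/4) \ ball p r` around `p = ±e₀/2` with a tiny
hole, together with the centre of the other shell. Its only bounded gap is the hole: as `n ≥ 2`,
every point outside the shell escapes to infinity along a coordinate ray that misses the extra
point. A box `A^{1/t}(B[0,1]) + z` meeting both the hole and the unbounded gap has some half-side
`β_j^{1/t} > 1/16`, which forces `t ≥ g` for any `0 < g ≤ min_j log_{1/16} β_j`, whereas for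
`r ≤ min_j β_j^{2/g}` the hole fits in a box with `t = g/2`. So each thickness is at least
`2/g - 1/g > 0`, yet the sets are disjoint and each meets both the hole and the unbounded gap of
the other.
-/

open Real

theorem exists_pos_forall_le {ι : Type*} [Finite ι] {f : ι → ℝ} (hf : ∀ i, 0 < f i) :
    ∃ c > 0, ∀ i, c ≤ f i := by
  cases isEmpty_or_nonempty ι
  · exact ⟨1, one_pos, isEmptyElim⟩
  · obtain ⟨i, hi⟩ := Finite.exists_min f
    exact ⟨f i, hf i, hi⟩

theorem lt_rpow_one_div_iff_logb_lt {b c t : ℝ} (hb₀ : 0 < b) (hb₁ : b < 1) (hc₀ : 0 < c)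
    (hc₁ : c < 1) (ht : 0 < t) : c < b ^ (1 / t) ↔ logb c b < t := by
  rw [← lt_logb_iff_rpow_lt_of_base_lt_one hb₀ hb₁ hc₀, ← inv_logb, one_div,
    inv_lt_inv₀ ht (logb_pos_of_base_lt_one hc₀ hc₁ hb₀ hb₁)]

section Boxes

variable {n : ℕ} {β : Fin n → ℝ}

theorem sizeWrt_nonneg (F : Set (Fin n → ℝ)) : 0 ≤ sizeWrt β F :=
  Real.sInf_nonneg fun _ ht => ht.1.le

theorem sizeWrt_le_of_subset_affBox {F : Set (Fin n → ℝ)} {t : ℝ} {z : Fin n → ℝ} (ht : 0 < t)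
    (hF : F ⊆ affBox β (1 / t) z) : sizeWrt β F ≤ t :=
  csInf_le ⟨0, fun _ hs => hs.1.le⟩ ⟨ht, z, hF⟩

theorem ball_subset_affBox {z : Fin n → ℝ} {r s : ℝ} (h : ∀ j, r ≤ β j ^ s) :
    ball z r ⊆ affBox β s z := fun x hx j =>
  ((Real.dist_eq _ _).symm.trans_le (dist_le_pi_dist x z j)).trans ((mem_ball.1 hx).le.trans (h j))

theorem exists_lt_rpow_of_mem_affBox {s c : ℝ} {z u v : Fin n → ℝ} (hc : 0 ≤ c)
    (hu : u ∈ affBox β s z) (hv : v ∈ affBox β s z) (huv : 2 * c < dist u v) :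
    ∃ j, c < β j ^ s := by
  by_contra! h
  refine huv.not_ge ((dist_pi_le_iff (by positivity)).2 fun j => ?_)
  rw [Real.dist_eq]
  have := abs_sub_le (u j) (z j) (v j)
  rw [abs_sub_comm (z j)] at this
  linarith [hu j, hv j, h j]

theorem exists_update_mem_affBox (hβ : ∀ j, β j ∈ Ioo (0 : ℝ) 1) (z : Fin n → ℝ) (i : Fin n)
    {d : ℝ} (hd₀ : 0 < d) (hd₁ : d < 1) :
    ∃ t > 0, z ∈ affBox β (1 / t) z ∧ Function.update z i (z i + d) ∈ affBox β (1 / t) z := by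
  have hlog := logb_pos_of_base_lt_one hd₀ hd₁ (hβ i).1 (hβ i).2
  have ht : 0 < logb d (β i) + 1 := by linarith
  have hbox : ∀ j, 0 ≤ β j ^ (1 / (logb d (β i) + 1)) := fun j => rpow_nonneg (hβ j).1.le _
  refine ⟨_, ht, fun j => by simpa using hbox j, fun j => ?_⟩
  rcases eq_or_ne j i with rfl | hj
  · simpa [abs_of_pos hd₀] using
      ((lt_rpow_one_div_iff_logb_lt (hβ j).1 (hβ j).2 hd₀ hd₁ ht).2 (by linarith)).le
  · simpa [hj] using hbox j

end Boxes

section SingleGap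

variable {n : ℕ} {β : Fin n → ℝ} {C H : Set (Fin n → ℝ)}

def GapEnum.single (hH : ∀ G, IsBoundedGap C G ↔ G = H) : GapEnum β C where
  J := {0}
  G _ := H
  downward _ _ hkl hl := le_antisymm (hkl.trans_eq hl) (Nat.zero_le _)
  isGap _ _ := (hH H).2 rfl
  inj _ hk _ hl _ := hk.trans hl.symm
  surj G hG := ⟨0, rfl, ((hH G).1 hG).symm⟩
  anti _ _ _ _ _ := le_rfl

theorem le_gapDist_single (hH : ∀ G, IsBoundedGap C G ↔ G = H) {g : ℝ}
    (hne : ∃ t > 0, ∃ z, (affBox β (1 / t) z ∩ H).Nonempty ∧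
      (affBox β (1 / t) z ∩ unboundedGap C).Nonempty)
    (hg : ∀ t > 0, ∀ z, (affBox β (1 / t) z ∩ H).Nonempty →
      (affBox β (1 / t) z ∩ unboundedGap C).Nonempty → g ≤ t) :
    g ≤ gapDist β C (GapEnum.single hH) 0 := by
  have hJ : (GapEnum.single (β := β) hH).J ∩ Iio 0 = ∅ := by ext; simp
  simp only [gapDist, hJ, biUnion_empty, empty_union]
  obtain ⟨t, ht, z, hz⟩ := hne
  exact le_csInf ⟨t, ht, z, hz⟩ fun t ⟨ht, z, hzH, hzE⟩ => hg t ht z hzH hzE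

theorem le_thicknessA_single (hH : ∀ G, IsBoundedGap C G ↔ G = H) {s g : ℝ} (hg : 0 < g)
    (hsH : sizeWrt β H ≤ s) (hgH : g ≤ gapDist β C (GapEnum.single hH) 0) :
    ((s⁻¹ - g⁻¹ : ℝ) : EReal) ≤ thicknessA β C (GapEnum.single hH) := by
  have hgd : gapDist β C (GapEnum.single hH) 0 ≠ 0 := (hg.trans_le hgH).ne'
  have hsize : ((s⁻¹ : ℝ) : EReal) ≤ invE (sizeWrt β H) := by
    unfold invE
    split_ifs with h0
    · exact le_top
    · exact EReal.coe_le_coe_iff.2 (inv_anti₀ ((sizeWrt_nonneg H).lt_of_ne' h0) hsH)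
  have hdist : invE (gapDist β C (GapEnum.single hH) 0) ≤ ((g⁻¹ : ℝ) : EReal) := by
    rw [invE, if_neg hgd]
    exact EReal.coe_le_coe_iff.2 (inv_anti₀ hg hgH)
  have hJ : (GapEnum.single (β := β) hH).J = {0} := rfl
  rw [thicknessA, if_neg (hJ ▸ singleton_ne_empty 0), if_neg (by simpa [hJ] using hgd), hJ,
    iInf_singleton, EReal.coe_sub]
  exact EReal.sub_le_sub hsize hdist

end SingleGap

theorem connectedComponentIn_eq_of_eq_union {X : Type*} [TopologicalSpace X] {F U V : Set X}
    (hF : F = U ∪ V) (hU : IsOpen U) (hV : IsOpen V) (hUV : Disjoint U V)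
    (hU' : IsPreconnected U) {x : X} (hx : x ∈ U) : connectedComponentIn F x = U :=
  (isPreconnected_connectedComponentIn.subset_left_of_subset_union hU hV hUV
      (hF ▸ connectedComponentIn_subset F x)
      ⟨x, mem_connectedComponentIn (hF ▸ Or.inl hx), hx⟩).antisymm
    (hU'.subset_connectedComponentIn hx (hF ▸ subset_union_left))

theorem not_exists_isGap_superset {n : ℕ} {C D : Set (Fin n → ℝ)} {x y : Fin n → ℝ}
    (hx : x ∈ D) (hy : y ∈ D) (hxy : y ∉ connectedComponentIn Cᶜ x) :
    ¬ ∃ G, IsGap C G ∧ D ⊆ G := by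
  rintro ⟨G, ⟨z, -, rfl⟩, hD⟩
  exact hxy (connectedComponentIn_eq (hD hx) ▸ hD hy)

section Ray

variable {n : ℕ} (p x : Fin n → ℝ) (i : Fin n)

noncomputable def pushAway (t : ℝ) : Fin n → ℝ :=
  Function.update x i (if p i ≤ x i then x i + t else x i - t)

theorem pushAway_zero : pushAway p x i 0 = x := by
  simp [pushAway]

variable {p x i} in
theorem abs_pushAway_sub {t : ℝ} (ht : 0 ≤ t) :
    |pushAway p x i t i - p i| = |x i - p i| + t := by
  simp only [pushAway, Function.update_self]
  split_ifs with h
  · rw [abs_of_nonneg (by linarith), abs_of_nonneg (by linarith)]; ring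
  · rw [abs_of_neg (by linarith), abs_of_neg (by linarith)]; ring

variable {p x i} in
theorem dist_le_dist_pushAway {t : ℝ} (ht : 0 ≤ t) : dist x p ≤ dist (pushAway p x i t) p := by
  refine (dist_pi_le_iff dist_nonneg).2 fun j => ?_
  refine le_trans ?_ (dist_le_pi_dist _ _ j)
  rw [Real.dist_eq, Real.dist_eq]
  rcases eq_or_ne j i with rfl | hj
  · rw [abs_pushAway_sub ht]; linarith
  · rw [pushAway, Function.update_of_ne hj]

theorem continuous_pushAway : Continuous (pushAway p x i) := by
  unfold pushAway
  split_ifs <;> fun_prop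

theorem not_isBounded_pushAway_image : ¬ Bornology.IsBounded (pushAway p x i '' Ici 0) := by
  intro h
  obtain ⟨R, hR⟩ := h.subset_closedBall p
  have hR' := hR ⟨|R| + 1, mem_Ici.2 (by positivity), rfl⟩
  rw [mem_closedBall] at hR'
  have := (Real.dist_eq _ _).symm.trans_le (dist_le_pi_dist (pushAway p x i (|R| + 1)) p i)
  rw [abs_pushAway_sub (by positivity)] at this
  linarith [abs_nonneg (x i - p i), le_abs_self R]

end Ray

def shellWithPoint {n : ℕ} (p : Fin n → ℝ) (R r : ℝ) (q : Fin n → ℝ) : Set (Fin n → ℝ) :=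
  (closedBall p R \ ball p r) ∪ {q}

section Shell

variable {n : ℕ} {p q : Fin n → ℝ} {R r : ℝ}

theorem isCompact_shellWithPoint : IsCompact (shellWithPoint p R r q) :=
  ((isCompact_closedBall p R).diff isOpen_ball).union isCompact_singleton

theorem shellWithPoint_subset_closedBall {z : Fin n → ℝ} {ρ : ℝ} (hp : dist p z + R ≤ ρ)
    (hq : dist q z ≤ ρ) : shellWithPoint p R r q ⊆ closedBall z ρ := by
  rintro x (⟨hx, -⟩ | rfl)
  · exact mem_closedBall.2 ((dist_triangle x p z).trans (by linarith [mem_closedBall.1 hx]))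
  · exact hq

theorem compl_shellWithPoint (hq : r ≤ dist q p) :
    (shellWithPoint p R r q)ᶜ = ball p r ∪ ((closedBall p R)ᶜ \ {q}) := by
  ext x
  simp only [shellWithPoint, mem_compl_iff, mem_union, Set.mem_sdiff, mem_singleton_iff, mem_ball,
    mem_closedBall]
  constructor
  · intro h
    obtain ⟨hxs, hxq⟩ := not_or.1 h
    by_cases hxr : dist x p < r
    · exact Or.inl hxr
    · exact Or.inr ⟨fun hxR => hxs ⟨hxR, hxr⟩, hxq⟩
  · rintro (hxr | ⟨hxR, hxq⟩) (⟨hxR', hxr'⟩ | rfl)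
    exacts [hxr' hxr, hxr.not_ge hq, hxR hxR', hxq rfl]

theorem connectedComponentIn_compl_shellWithPoint (hrR : r ≤ R) (hq : r ≤ dist q p)
    {x : Fin n → ℝ} (hx : x ∈ ball p r) :
    connectedComponentIn (shellWithPoint p R r q)ᶜ x = ball p r :=
  connectedComponentIn_eq_of_eq_union (compl_shellWithPoint hq) isOpen_ball
    (isClosed_closedBall.isOpen_compl.sdiff isClosed_singleton)
    (disjoint_left.2 fun _ hy hy' =>
      hy'.1 (ball_subset_closedBall.trans (closedBall_subset_closedBall hrR) hy))
    (convex_ball p r).isPreconnected hx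

theorem not_isBounded_connectedComponentIn_compl_shellWithPoint {i : Fin n} (hqi : q i = p i)
    {x : Fin n → ℝ} (hx : x ∈ (closedBall p R)ᶜ \ {q}) :
    ¬ Bornology.IsBounded (connectedComponentIn (shellWithPoint p R r q)ᶜ x) := by
  have hray : pushAway p x i '' Ici 0 ⊆ (shellWithPoint p R r q)ᶜ := by
    rintro _ ⟨t, ht, rfl⟩ (⟨hy, -⟩ | hy)
    · exact hx.1 (mem_closedBall.2 ((dist_le_dist_pushAway ht).trans (mem_closedBall.1 hy)))
    · rcases (mem_Ici.1 ht).eq_or_lt with rfl | ht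
      · exact hx.2 (by rwa [pushAway_zero] at hy)
      · have := abs_pushAway_sub (p := p) (x := x) (i := i) ht.le
        rw [mem_singleton_iff.1 hy, hqi, sub_self, abs_zero] at this
        linarith [abs_nonneg (x i - p i)]
  have hx' : x ∈ pushAway p x i '' Ici 0 := ⟨0, mem_Ici.2 le_rfl, pushAway_zero p x i⟩
  have hpre := (isPreconnected_Ici (a := (0 : ℝ))).image _ (continuous_pushAway p x i).continuousOn
  exact fun h => not_isBounded_pushAway_image p x i
    (h.subset (hpre.subset_connectedComponentIn hx' hray))

theorem unboundedGap_shellWithPoint {i : Fin n} (hqi : q i = p i) (hrR : r ≤ R)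
    (hq : r ≤ dist q p) : unboundedGap (shellWithPoint p R r q) = (closedBall p R)ᶜ \ {q} := by
  ext x
  constructor
  · rintro ⟨hx, hb⟩
    rw [compl_shellWithPoint hq] at hx
    rcases hx with hx | hx
    · exact absurd (connectedComponentIn_compl_shellWithPoint hrR hq hx ▸ isBounded_ball) hb
    · exact hx
  · intro hx
    exact ⟨compl_shellWithPoint hq ▸ Or.inr hx,
      not_isBounded_connectedComponentIn_compl_shellWithPoint hqi hx⟩

theorem isBoundedGap_shellWithPoint_iff {i : Fin n} (hqi : q i = p i) (hr : 0 < r) (hrR : r ≤ R)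
    (hq : r ≤ dist q p) (G : Set (Fin n → ℝ)) :
    IsBoundedGap (shellWithPoint p R r q) G ↔ G = ball p r := by
  constructor
  · rintro ⟨⟨x, hx, rfl⟩, hb⟩
    rw [compl_shellWithPoint hq] at hx
    rcases hx with hx | hx
    · exact connectedComponentIn_compl_shellWithPoint hrR hq hx
    · exact absurd hb (not_isBounded_connectedComponentIn_compl_shellWithPoint hqi hx)
  · rintro rfl
    have hp : p ∈ ball p r := mem_ball_self hr
    exact ⟨⟨p, compl_shellWithPoint hq ▸ Or.inl hp,
      (connectedComponentIn_compl_shellWithPoint hrR hq hp).symm⟩, isBounded_ball⟩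

end Shell

section Pair

variable {n : ℕ} {p q : Fin n → ℝ} {R r : ℝ}

theorem exists_le_thicknessA_shellWithPoint {β : Fin n → ℝ} (hβ : ∀ j, β j ∈ Ioo (0 : ℝ) 1)
    {i : Fin n} (hqi : q i = p i) (hRq : R < dist q p) (hR : R < 1) (hr : 0 < r) {c s g : ℝ}
    (hc : 0 < c) (hcR : 2 * c ≤ R - r) (hrs : ∀ j, r ≤ β j ^ (1 / s)) (hs : 0 < s) (hg : 0 < g)
    (hgc : ∀ j, g ≤ logb c (β j)) :
    ∃ e : GapEnum β (shellWithPoint p R r q),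
      ((s⁻¹ - g⁻¹ : ℝ) : EReal) ≤ thicknessA β (shellWithPoint p R r q) e := by
  have hrR : r ≤ R := by linarith
  have hq : r ≤ dist q p := by linarith
  have hE := unboundedGap_shellWithPoint (r := r) hqi hrR hq
  refine ⟨_, le_thicknessA_single (isBoundedGap_shellWithPoint_iff hqi hr hrR hq) hg
    (sizeWrt_le_of_subset_affBox hs (ball_subset_affBox hrs)) (le_gapDist_single _ ?_ ?_)⟩
  · obtain ⟨d, hRd, hd₁⟩ := exists_between hR
    have hd₀ : 0 < d := by linarith
    obtain ⟨t, ht, hp, hv⟩ := exists_update_mem_affBox hβ p i hd₀ hd₁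
    refine ⟨t, ht, p, ⟨p, hp, mem_ball_self hr⟩, _, hv, hE ▸ ⟨fun hvR => ?_, fun hvq => ?_⟩⟩
    · have := (dist_le_pi_dist _ p i).trans (mem_closedBall.1 hvR)
      simp only [Function.update_self, Real.dist_eq, add_sub_cancel_left, abs_of_pos hd₀] at this
      linarith
    · have := congrFun (mem_singleton_iff.1 hvq) i
      simp only [Function.update_self, hqi] at this
      linarith
  · rintro t ht z ⟨u, hu, hup⟩ ⟨v, hv, hvE⟩
    rw [hE] at hvE
    have huv : 2 * c < dist u v := by
      have := dist_triangle v u p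
      linarith [mem_ball.1 hup, lt_of_not_ge (mt mem_closedBall.2 hvE.1), dist_comm u v]
    obtain ⟨j, hj⟩ := exists_lt_rpow_of_mem_affBox hc.le hu hv huv
    have hc₁ : c < 1 := by linarith
    exact (hgc j).trans ((lt_rpow_one_div_iff_logb_lt (hβ j).1 (hβ j).2 hc hc₁ ht).1 hj).le

theorem shellWithPoint_inter_shellWithPoint (hr : 0 < r) (hrR : r ≤ R) (hpq : 2 * R < dist p q) :
    shellWithPoint p R r q ∩ shellWithPoint q R r p = ∅ := by
  refine eq_empty_iff_forall_notMem.2 fun x => ?_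
  rintro ⟨⟨hxp, hxp'⟩ | rfl, ⟨hxq, hxq'⟩ | rfl⟩
  · linarith [dist_triangle_left p q x, mem_closedBall.1 hxp, mem_closedBall.1 hxq]
  · exact hxp' (mem_ball_self hr)
  · exact hxq' (mem_ball_self hr)
  · linarith [dist_self x]

theorem not_exists_isGap_superset_shellWithPoint [Nonempty (Fin n)] (hr : 0 < r) (hrR : r ≤ R)
    (hpq : 2 * R < dist p q) :
    ¬ ∃ G, IsGap (shellWithPoint p R r q) G ∧ shellWithPoint q R r p ⊆ G := by
  obtain ⟨y, hy⟩ := (NormedSpace.sphere_nonempty (x := q)).2 (hr.le.trans hrR)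
  have hyp : R < dist y p := by linarith [dist_triangle p y q, mem_sphere.1 hy, dist_comm p y]
  refine not_exists_isGap_superset (x := p) (y := y) (Or.inr rfl)
    (Or.inl ⟨sphere_subset_closedBall hy, fun hyq => ?_⟩) ?_
  · exact (mem_ball.1 hyq).not_ge (by rw [mem_sphere.1 hy]; exact hrR)
  · have hqp : r ≤ dist q p := by rw [dist_comm]; linarith
    rw [connectedComponentIn_compl_shellWithPoint hrR hqp (mem_ball_self hr)]
    exact fun h => (mem_ball.1 h).not_ge (by linarith)

end Pair

theorem exists_gapScale_holeRadius {n : ℕ} {β : Fin n → ℝ} (hβ : ∀ j, β j ∈ Ioo (0 : ℝ) 1) :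
    ∃ g > 0, (∀ j, g ≤ logb (1 / 16) (β j)) ∧
      ∃ r > 0, r ≤ 1 / 8 ∧ ∀ j, r ≤ β j ^ (1 / (g / 2)) := by
  obtain ⟨g, hg, hgβ⟩ := exists_pos_forall_le fun j =>
    logb_pos_of_base_lt_one (b := 1 / 16) (by norm_num) (by norm_num) (hβ j).1 (hβ j).2
  obtain ⟨r, hr, hrβ⟩ := exists_pos_forall_le fun j => rpow_pos_of_pos (hβ j).1 (1 / (g / 2))
  exact ⟨g, hg, hgβ, min r (1 / 8), lt_min hr (by norm_num), min_le_right _ _,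
    fun j => (min_le_left _ _).trans (hrβ j)⟩

/-- counterexample sets with large affine thickness but empty intersection. -/
theorem affine_thickness_counterexample (n : ℕ) (hn : 2 ≤ n)
    (β : Fin n → ℝ) (hβ : ∀ j, β j ∈ Set.Ioo (0 : ℝ) 1) :
    ∃ C₁ C₂ : Set (Fin n → ℝ),
      IsCompact C₁ ∧ IsCompact C₂ ∧ C₁.Nonempty ∧ C₂.Nonempty ∧
      C₁ ⊆ closedBall 0 1 ∧ C₂ ⊆ closedBall 0 1 ∧
      (¬ ∃ G, IsGap C₂ G ∧ C₁ ⊆ G) ∧ (¬ ∃ G, IsGap C₁ G ∧ C₂ ⊆ G) ∧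
      (∃ e₁ : GapEnum β C₁, ∃ e₂ : GapEnum β C₂,
        0 < thicknessA β C₁ e₁ + thicknessA β C₂ e₂) ∧
      C₁ ∩ C₂ = ∅ := by
  have : Nonempty (Fin n) := ⟨⟨0, by omega⟩⟩
  obtain ⟨g, hg, hgβ, r, hr, hr8, hrβ⟩ := exists_gapScale_holeRadius hβ
  have hrR : r ≤ 1 / 4 := hr8.trans (by norm_num)
  set p : Fin n → ℝ := Pi.single ⟨0, by omega⟩ (1 / 2)
  have hp : ‖p‖ = 1 / 2 := by simp [p, Pi.norm_single]
  have hpp : dist p (-p) = 1 := by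
    rw [dist_eq_norm, sub_neg_eq_add, ← two_smul ℝ, norm_smul, hp]; norm_num
  have hp₁ : (-p) ⟨1, hn⟩ = p ⟨1, hn⟩ := by simp [p]
  have hthick : ∀ q q' : Fin n → ℝ, q' ⟨1, hn⟩ = q ⟨1, hn⟩ → dist q' q = 1 →
      ∃ e : GapEnum β (shellWithPoint q (1 / 4) r q'),
        (((g / 2)⁻¹ - g⁻¹ : ℝ) : EReal) ≤ thicknessA β _ e := fun q q' hqq' hd =>
    exists_le_thicknessA_shellWithPoint hβ hqq' (by rw [hd]; norm_num) (by norm_num) hr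
      (c := 1 / 16) (by norm_num) (by linarith) hrβ (by positivity) hg hgβ
  obtain ⟨e₁, he₁⟩ := hthick p (-p) hp₁ (by rw [dist_comm, hpp])
  obtain ⟨e₂, he₂⟩ := hthick (-p) p hp₁.symm hpp
  have hpos : (0 : EReal) < thicknessA β _ e₁ + thicknessA β _ e₂ := by
    refine lt_of_lt_of_le ?_ (add_le_add he₁ he₂)
    rw [← EReal.coe_add, EReal.coe_pos, inv_div, ← one_div, div_sub_div_same]
    positivity
  refine ⟨_, _, isCompact_shellWithPoint, isCompact_shellWithPoint, ⟨_, Or.inr rfl⟩,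
    ⟨_, Or.inr rfl⟩, shellWithPoint_subset_closedBall ?_ ?_, shellWithPoint_subset_closedBall ?_ ?_,
    not_exists_isGap_superset_shellWithPoint hr hrR ?_,
    not_exists_isGap_superset_shellWithPoint hr hrR ?_, ⟨e₁, e₂, hpos⟩,
    shellWithPoint_inter_shellWithPoint hr hrR ?_⟩
  all_goals norm_num [dist_zero_right, hp, hpp, dist_comm (-p) p]
end

section
/- For every n ≥ 2 there exist compact sets C₁, C₂ ⊆ ℝⁿ such that neither set lies in a gap of the other, the product of their Falconer–Yavicoli thicknesses satisfies τ(C₁)·τ(C₂) > 1, and yet C₁ ∩ C₂ = ∅; in particular the Newhouse gap lemma with Falconer–Yavicoli thickness fails in ℝⁿ for n ≥ 2. -/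
open Metric Set Topology Filter
open scoped ENNReal Classical

def tenV (n : ℕ) : Fin n → ℝ := fun _ => 10

lemma coord_abs_le {n : ℕ} (x : Fin n → ℝ) (j : Fin n) : |x j| ≤ ‖x‖ := by
  simpa [Real.norm_eq_abs] using norm_le_pi_norm x j

lemma coordb_abs_le {n : ℕ} (x : Fin n → ℝ) (j : Fin n) : |x j - 10| ≤ ‖x - tenV n‖ := by
  simpa [Real.norm_eq_abs, tenV] using norm_le_pi_norm (x - tenV n) j

lemma U_conn {n : ℕ} (hn : 2 ≤ n) {r s : ℝ} (hr0 : 0 < r) (hr1 : r ≤ 1)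
    (hs0 : 0 < s) (hs1 : s ≤ 1) :
    IsPreconnected {x : Fin n → ℝ | r < ‖x‖ ∧ s < ‖x - tenV n‖} := by
  haveI : Nonempty (Fin n) := ⟨⟨0, by omega⟩⟩
  haveI : Nontrivial (Fin n) := ⟨⟨0, by omega⟩, ⟨1, by omega⟩, Fin.ne_of_val_ne (by norm_num)⟩
  set U : Set (Fin n → ℝ) := {x | r < ‖x‖ ∧ s < ‖x - tenV n‖} with hUdef
  have lin : ∀ j : Fin n, IsLinearMap ℝ (fun y : Fin n → ℝ => y j) :=
    fun j => ⟨fun _ _ => rfl, fun _ _ => rfl⟩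
  have seg : ∀ (V : Set (Fin n → ℝ)), Convex ℝ V → V ⊆ U → ∀ x ∈ V, ∀ y ∈ V, JoinedIn U x y :=
    fun V hV hVU x hx y hy => ((hV.isPathConnected ⟨x, hx⟩).joinedIn x hx y hy).mono hVU
  -- pieces
  have subNeg : ∀ j : Fin n, {y : Fin n → ℝ | y j < -r} ⊆ U := by
    intro j y hy
    simp only [mem_setOf_eq] at hy
    refine ⟨?_, ?_⟩
    · have h1 := coord_abs_le y j
      have : r < -(y j) := by linarith
      have := neg_le_abs (y j); linarith
    · have h1 := coordb_abs_le y j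
      have := neg_le_abs (y j - 10); linarith
  have convNeg : ∀ j : Fin n, Convex ℝ {y : Fin n → ℝ | y j < -r} :=
    fun j => convex_halfSpace_lt (lin j) _
  have subHigh : ∀ j : Fin n, {y : Fin n → ℝ | 10 + s < y j} ⊆ U := by
    intro j y hy
    simp only [mem_setOf_eq] at hy
    refine ⟨?_, ?_⟩
    · have h1 := coord_abs_le y j
      have := le_abs_self (y j); linarith
    · have h1 := coordb_abs_le y j
      have := le_abs_self (y j - 10); linarith
  have convHigh : ∀ j : Fin n, Convex ℝ {y : Fin n → ℝ | 10 + s < y j} :=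
    fun j => convex_halfSpace_gt (lin j) _
  have subSlab : ∀ j : Fin n, {y : Fin n → ℝ | r < y j ∧ y j < 10 - s} ⊆ U := by
    intro j y hy
    simp only [mem_setOf_eq] at hy
    refine ⟨?_, ?_⟩
    · have h1 := coord_abs_le y j
      have := le_abs_self (y j); linarith
    · have h1 := coordb_abs_le y j
      have := neg_le_abs (y j - 10); linarith
  have convSlab : ∀ j : Fin n, Convex ℝ {y : Fin n → ℝ | r < y j ∧ y j < 10 - s} := by
    intro j
    rw [show {y : Fin n → ℝ | r < y j ∧ y j < 10 - s}
        = {y : Fin n → ℝ | r < y j} ∩ {y : Fin n → ℝ | y j < 10 - s} from rfl]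
    exact (convex_halfSpace_gt (lin j) _).inter (convex_halfSpace_lt (lin j) _)
  have subMid : ∀ j k : Fin n, {y : Fin n → ℝ | 8 < y j ∧ y k < 10 - s} ⊆ U := by
    intro j k y hy
    simp only [mem_setOf_eq] at hy
    refine ⟨?_, ?_⟩
    · have h1 := coord_abs_le y j
      have := le_abs_self (y j); linarith
    · have h1 := coordb_abs_le y k
      have := neg_le_abs (y k - 10); linarith
  have convMid : ∀ j k : Fin n, Convex ℝ {y : Fin n → ℝ | 8 < y j ∧ y k < 10 - s} := by
    intro j k
    rw [show {y : Fin n → ℝ | 8 < y j ∧ y k < 10 - s}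
        = {y : Fin n → ℝ | 8 < y j} ∩ {y : Fin n → ℝ | y k < 10 - s} from rfl]
    exact (convex_halfSpace_gt (lin j) _).inter (convex_halfSpace_lt (lin k) _)
  -- base point
  set p : Fin n → ℝ := fun _ => -2 with hpdef
  have hpNeg : ∀ j : Fin n, p ∈ {y : Fin n → ℝ | y j < -r} := by
    intro j; simp only [mem_setOf_eq, hpdef]; linarith
  have hp : p ∈ U := subNeg ⟨0, by omega⟩ (hpNeg _)
  have toP : ∀ (q : Fin n → ℝ) (k : Fin n), q k < -r → JoinedIn U q p :=
    fun q k hq => seg _ (convNeg k) (subNeg k) q hq p (hpNeg k)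
  have key : ∀ x ∈ U, JoinedIn U x p := by
    intro x hx
    obtain ⟨hx1, hx2⟩ := hx
    obtain ⟨m, hm⟩ : ∃ m, r < |x m| := by
      by_contra hc
      push_neg at hc
      have : ‖x‖ ≤ r := (pi_norm_le_iff_of_nonneg hr0.le).2
        (fun i => by simpa [Real.norm_eq_abs] using hc i)
      linarith
    obtain ⟨j, hj⟩ : ∃ j, s < |x j - 10| := by
      by_contra hc
      push_neg at hc
      have : ‖x - tenV n‖ ≤ s := (pi_norm_le_iff_of_nonneg hs0.le).2
        (fun i => by simpa [Real.norm_eq_abs, tenV] using hc i)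
      linarith
    rcases lt_abs.mp hj with hj1 | hj2
    · -- x j > 10 + s
      obtain ⟨k, hk⟩ := exists_ne j
      set q : Fin n → ℝ := Function.update p j 12 with hqdef
      have hq1 : q ∈ {y : Fin n → ℝ | 10 + s < y j} := by
        simp only [mem_setOf_eq, hqdef, Function.update_self]; linarith
      have hx' : x ∈ {y : Fin n → ℝ | 10 + s < y j} := by
        simp only [mem_setOf_eq]; linarith
      have step1 := seg _ (convHigh j) (subHigh j) x hx' q hq1
      have hqk : q k < -r := by
        rw [hqdef, Function.update_of_ne hk]; simp only [hpdef]; linarith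
      exact step1.trans (toP q k hqk)
    · -- x j < 10 - s
      have hjlt : x j < 10 - s := by linarith
      rcases lt_abs.mp hm with hm1 | hm2
      · -- r < x m
        by_cases hms : x m < 10 - s
        · obtain ⟨k, hk⟩ := exists_ne m
          set q : Fin n → ℝ := Function.update p m 2 with hqdef
          have hq1 : q ∈ {y : Fin n → ℝ | r < y m ∧ y m < 10 - s} := by
            simp only [mem_setOf_eq, hqdef, Function.update_self]
            constructor <;> linarith
          have hx' : x ∈ {y : Fin n → ℝ | r < y m ∧ y m < 10 - s} := ⟨hm1, hms⟩
          have step1 := seg _ (convSlab m) (subSlab m) x hx' q hq1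
          have hqk : q k < -r := by
            rw [hqdef, Function.update_of_ne hk]; simp only [hpdef]; linarith
          exact step1.trans (toP q k hqk)
        · push_neg at hms
          have hmj : j ≠ m := by intro h; rw [h] at hjlt; linarith
          obtain ⟨k, hk⟩ := exists_ne m
          set q : Fin n → ℝ := Function.update p m 9 with hqdef
          have hq1 : q ∈ {y : Fin n → ℝ | 8 < y m ∧ y j < 10 - s} := by
            refine ⟨by simp only [mem_setOf_eq, hqdef, Function.update_self]; linarith, ?_⟩
            rw [hqdef, Function.update_of_ne hmj]; simp only [hpdef]; linarith
          have hx' : x ∈ {y : Fin n → ℝ | 8 < y m ∧ y j < 10 - s} := ⟨by linarith, hjlt⟩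
          have step1 := seg _ (convMid m j) (subMid m j) x hx' q hq1
          have hqk : q k < -r := by
            rw [hqdef, Function.update_of_ne hk]; simp only [hpdef]; linarith
          exact step1.trans (toP q k hqk)
      · -- x m < -r
        exact seg _ (convNeg m) (subNeg m) x (by simp only [mem_setOf_eq]; linarith) p (hpNeg m)
  have : IsPathConnected U := ⟨p, hp, fun {y} hy => (key y hy).symm⟩
  exact this.isConnected.isPreconnected

lemma comp_classify {n : ℕ} {C H U : Set (Fin n → ℝ)} (hcompl : Cᶜ = H ∪ U)
    (hHo : IsOpen H) (hUo : IsOpen U) (hd : Disjoint H U)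
    (hHc : IsPreconnected H) (hUc : IsPreconnected U) :
    (∀ x ∈ H, connectedComponentIn Cᶜ x = H) ∧
    (∀ x ∈ U, connectedComponentIn Cᶜ x = U) := by
  constructor
  · intro x hx
    apply Subset.antisymm
    · exact isPreconnected_connectedComponentIn.subset_left_of_subset_union hHo hUo hd
        (hcompl ▸ connectedComponentIn_subset _ _)
        ⟨x, mem_connectedComponentIn (by rw [hcompl]; exact Or.inl hx), hx⟩
    · exact hHc.subset_connectedComponentIn hx (by rw [hcompl]; exact subset_union_left)
  · intro x hx
    apply Subset.antisymm
    · exact isPreconnected_connectedComponentIn.subset_left_of_subset_union hUo hHo hd.symm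
        (by rw [union_comm]; exact hcompl ▸ connectedComponentIn_subset _ _)
        ⟨x, mem_connectedComponentIn (by rw [hcompl]; exact Or.inr hx), hx⟩
    · exact hUc.subset_connectedComponentIn hx (by rw [hcompl]; exact subset_union_right)

lemma main_thick {n : ℕ} (hn : 2 ≤ n) (C : Set (Fin n → ℝ)) (c : Fin n → ℝ)
    (U : Set (Fin n → ℝ))
    (hcompl : Cᶜ = ball c 4⁻¹ ∪ U) (hUo : IsOpen U) (hUc : IsPreconnected U)
    (hUunb : ¬ Bornology.IsBounded U) (hfar : ∀ x ∈ U, 1 < dist x c) :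
    ∃ e : DiamEnum C, ENNReal.ofReal (3/2) ≤ FYthickness C e := by
  haveI : Nonempty (Fin n) := ⟨⟨0, by omega⟩⟩
  have hdisj : Disjoint (ball c 4⁻¹) U := by
    rw [Set.disjoint_left]
    intro x hx hxU
    have h1 := hfar x hxU
    rw [mem_ball] at hx
    linarith
  obtain ⟨compH, compU⟩ := comp_classify hcompl isOpen_ball hUo hdisj
    (convex_ball c 4⁻¹).isPreconnected hUc
  have hUne : U.Nonempty := by
    rcases U.eq_empty_or_nonempty with h | h
    · exact absurd (h ▸ Bornology.isBounded_empty) hUunb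
    · exact h
  have hcball : c ∈ ball c 4⁻¹ := mem_ball_self (by norm_num)
  have hcC : c ∈ Cᶜ := by rw [hcompl]; exact Or.inl hcball
  have hUsub : U ⊆ Cᶜ := by rw [hcompl]; exact subset_union_right
  have hUcompUnb : ∀ x ∈ U, ¬ Bornology.IsBounded (connectedComponentIn Cᶜ x) := by
    intro x hx hb
    exact hUunb (hb.subset (hUc.subset_connectedComponentIn hx hUsub))
  have hgapH : IsBoundedGap C (ball c 4⁻¹) :=
    ⟨⟨c, hcC, (compH c hcball).symm⟩, isBounded_ball⟩
  have hsurj : ∀ G, IsBoundedGap C G → G = ball c 4⁻¹ := by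
    rintro G ⟨⟨x, hx, rfl⟩, hb⟩
    rw [hcompl] at hx
    rcases hx with hx | hx
    · exact compH x hx
    · exact absurd hb (hUcompUnb x hx)
  have hugap : unboundedGap C = U := by
    ext x
    constructor
    · rintro ⟨hx1, hx2⟩
      rcases (hcompl ▸ hx1 : x ∈ ball c 4⁻¹ ∪ U) with h | h
      · exact absurd (by rw [compH x h]; exact isBounded_ball) hx2
      · exact h
    · intro hx
      exact ⟨hUsub hx, hUcompUnb x hx⟩
  refine ⟨⟨{0}, fun _ => ball c 4⁻¹, ?_, fun _ _ => hgapH, ?_, ?_, fun _ _ _ _ _ => le_refl _⟩, ?_⟩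
  · intro k l hkl hl
    simp only [mem_singleton_iff] at hl ⊢
    omega
  · intro k hk l hl _
    simp only [mem_singleton_iff] at hk hl
    omega
  · intro G hG
    exact ⟨0, rfl, (hsurj G hG).symm⟩
  · unfold FYthickness
    rw [if_neg (by simp : ({0} : Set ℕ) ≠ ∅)]
    refine le_iInf₂ ?_
    intro k hk
    simp only [mem_singleton_iff] at hk
    subst hk
    have hIio : ({0} : Set ℕ) ∩ Iio 0 = ∅ := by
      ext m; simp
    rw [hIio]
    simp only [mem_empty_iff_false, iUnion_of_empty, iUnion_empty, union_empty]
    rw [hugap]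
    apply ENNReal.ofReal_le_ofReal
    have hdiam_le : diam (ball c 4⁻¹) ≤ 2 * 4⁻¹ := diam_ball (by norm_num)
    have hdiam_pos : 0 < diam (ball c 4⁻¹) := by
      set v : Fin n → ℝ := Pi.single ⟨0, by omega⟩ (8⁻¹ : ℝ) with hv
      have hvn : ‖v‖ = 8⁻¹ := by
        rw [hv, Pi.norm_single]
        simp [Real.norm_eq_abs]
      have hmem : c + v ∈ ball c 4⁻¹ := by
        rw [mem_ball, dist_eq_norm, add_sub_cancel_left, hvn]
        norm_num
      have := dist_le_diam_of_mem isBounded_ball hmem hcball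
      rw [dist_eq_norm, add_sub_cancel_left, hvn] at this
      linarith
    have hsd : 3/4 ≤ setDist (ball c 4⁻¹) U := by
      unfold setDist
      apply le_csInf
      · obtain ⟨u, hu⟩ := hUne
        exact ⟨dist c u, c, hcball, u, hu, rfl⟩
      · rintro ρ ⟨a, ha, v, hv, rfl⟩
        have h1 := hfar v hv
        have h2 : dist a c < 4⁻¹ := mem_ball.mp ha
        have h3 := dist_triangle v a c
        have h4 : dist v a = dist a v := dist_comm v a
        linarith
    rw [le_div_iff₀ hdiam_pos]
    nlinarith

/-- failure of the Newhouse gap lemma for the Falconer–Yavicoli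
thickness in `ℝⁿ`, `n ≥ 2`. -/
theorem falconer_yavicoli_gap_lemma_fails (n : ℕ) (hn : 2 ≤ n) :
    ∃ C₁ C₂ : Set (Fin n → ℝ),
      IsCompact C₁ ∧ IsCompact C₂ ∧
      (¬ ∃ G, IsGap C₂ G ∧ C₁ ⊆ G) ∧ (¬ ∃ G, IsGap C₁ G ∧ C₂ ⊆ G) ∧
      (∃ e₁ : DiamEnum C₁, ∃ e₂ : DiamEnum C₂,
        1 < FYthickness C₁ e₁ * FYthickness C₂ e₂) ∧
      C₁ ∩ C₂ = ∅ := by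
  haveI : Nonempty (Fin n) := ⟨⟨0, by omega⟩⟩
  set b : Fin n → ℝ := tenV n with hbdef
  have hb10 : ‖b‖ = 10 := by
    rw [hbdef, show tenV n = fun _ : Fin n => (10:ℝ) from rfl, pi_norm_const]
    norm_num
  have key10 : ∀ x : Fin n → ℝ, 10 ≤ ‖x‖ + ‖x - b‖ := by
    intro x
    have h := norm_sub_le x (x - b)
    rw [show x - (x - b) = b by abel, hb10] at h
    exact h
  set C₁ : Set (Fin n → ℝ) := (closedBall 0 1 \ ball 0 4⁻¹) ∪ closedBall b 8⁻¹ with hC₁def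
  set C₂ : Set (Fin n → ℝ) := (closedBall b 1 \ ball b 4⁻¹) ∪ closedBall 0 8⁻¹ with hC₂def
  set U₁ : Set (Fin n → ℝ) := {x | 1 < ‖x‖ ∧ 8⁻¹ < ‖x - b‖} with hU₁def
  set U₂ : Set (Fin n → ℝ) := {x | 8⁻¹ < ‖x‖ ∧ 1 < ‖x - b‖} with hU₂def
  have hU₁o : IsOpen U₁ :=
    (isOpen_lt continuous_const continuous_norm).inter
      (isOpen_lt continuous_const ((continuous_id.sub continuous_const).norm))
  have hU₂o : IsOpen U₂ :=
    (isOpen_lt continuous_const continuous_norm).inter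
      (isOpen_lt continuous_const ((continuous_id.sub continuous_const).norm))
  have hU₁c : IsPreconnected U₁ := U_conn hn (by norm_num) (by norm_num) (by norm_num) (by norm_num)
  have hU₂c : IsPreconnected U₂ := U_conn hn (by norm_num) (by norm_num) (by norm_num) (by norm_num)
  have hunb : ∀ (r s : ℝ), r ≤ 1 → s ≤ 1 →
      ¬ Bornology.IsBounded {x : Fin n → ℝ | r < ‖x‖ ∧ s < ‖x - b‖} := by
    intro r s hr hs hbd
    rw [isBounded_iff_forall_norm_le] at hbd
    obtain ⟨R, hR⟩ := hbd
    set t : ℝ := max R 0 + 12 with htdef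
    have ht : 12 ≤ t ∧ R ≤ t - 12 := ⟨by simp [htdef, le_max_right], by simp [htdef, le_max_left]⟩
    set v : Fin n → ℝ := fun _ => t with hvdef
    have hv1 : ‖v‖ = t := by
      rw [hvdef, pi_norm_const, Real.norm_eq_abs, abs_of_nonneg (by linarith [ht.1])]
    have hv2 : ‖v - b‖ = t - 10 := by
      have : v - b = fun _ => t - 10 := by
        funext i; show t - (10:ℝ) = t - 10; rfl
      rw [this, pi_norm_const, Real.norm_eq_abs, abs_of_nonneg (by linarith [ht.1])]
    have hvU : v ∈ {x : Fin n → ℝ | r < ‖x‖ ∧ s < ‖x - b‖} :=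
      ⟨by rw [hv1]; linarith [ht.1], by rw [hv2]; linarith [ht.1]⟩
    have := hR v hvU
    rw [hv1] at this
    linarith [ht.2]
  have hU₁unb : ¬ Bornology.IsBounded U₁ := hunb 1 8⁻¹ le_rfl (by norm_num)
  have hU₂unb : ¬ Bornology.IsBounded U₂ := hunb 8⁻¹ 1 (by norm_num) le_rfl
  have hcompl₁ : C₁ᶜ = ball (0 : Fin n → ℝ) 4⁻¹ ∪ U₁ := by
    ext x
    simp only [hC₁def, hU₁def, mem_compl_iff, mem_union, mem_diff, mem_closedBall, mem_ball,
      mem_setOf_eq, dist_zero_right, dist_eq_norm, sub_zero, not_or, not_and, not_not, not_le]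
    constructor
    · rintro ⟨h1, h2⟩
      by_cases h : ‖x‖ < 4⁻¹
      · exact Or.inl h
      · refine Or.inr ⟨?_, h2⟩
        by_contra hle
        push_neg at hle
        exact h (h1 hle)
    · rintro (h | ⟨h1, h2⟩)
      · refine ⟨fun _ => h, ?_⟩
        have := key10 x
        linarith
      · exact ⟨fun hle => absurd h1 (by linarith), h2⟩
  have hcompl₂ : C₂ᶜ = ball b 4⁻¹ ∪ U₂ := by
    ext x
    simp only [hC₂def, hU₂def, mem_compl_iff, mem_union, mem_diff, mem_closedBall, mem_ball,
      mem_setOf_eq, dist_zero_right, dist_eq_norm, sub_zero, not_or, not_and, not_not, not_le]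
    constructor
    · rintro ⟨h1, h2⟩
      by_cases h : ‖x - b‖ < 4⁻¹
      · exact Or.inl h
      · refine Or.inr ⟨h2, ?_⟩
        by_contra hle
        push_neg at hle
        exact h (h1 hle)
    · rintro (h | ⟨h1, h2⟩)
      · refine ⟨fun _ => h, ?_⟩
        have := key10 x
        linarith
      · exact ⟨fun hle => absurd h2 (by linarith), h1⟩
  have hfar₁ : ∀ x ∈ U₁, 1 < dist x (0 : Fin n → ℝ) := by
    intro x hx; rw [dist_zero_right]; exact hx.1
  have hfar₂ : ∀ x ∈ U₂, 1 < dist x b := by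
    intro x hx; rw [dist_eq_norm]; exact hx.2
  have hdisj₁ : Disjoint (ball (0 : Fin n → ℝ) 4⁻¹) U₁ := by
    rw [Set.disjoint_left]
    intro x hx hxU
    have := hfar₁ x hxU
    rw [mem_ball] at hx
    linarith
  have hdisj₂ : Disjoint (ball b 4⁻¹) U₂ := by
    rw [Set.disjoint_left]
    intro x hx hxU
    have := hfar₂ x hxU
    rw [mem_ball] at hx
    linarith
  obtain ⟨compH₁, compU₁⟩ := comp_classify hcompl₁ isOpen_ball hU₁o hdisj₁
    (convex_ball _ _).isPreconnected hU₁c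
  obtain ⟨compH₂, compU₂⟩ := comp_classify hcompl₂ isOpen_ball hU₂o hdisj₂
    (convex_ball _ _).isPreconnected hU₂c
  obtain ⟨e₁, he₁⟩ := main_thick hn C₁ 0 U₁ hcompl₁ hU₁o hU₁c hU₁unb hfar₁
  obtain ⟨e₂, he₂⟩ := main_thick hn C₂ b U₂ hcompl₂ hU₂o hU₂c hU₂unb hfar₂
  refine ⟨C₁, C₂, ?_, ?_, ?_, ?_, ⟨e₁, e₂, ?_⟩, ?_⟩
  · exact ((isCompact_closedBall _ _).diff isOpen_ball).union (isCompact_closedBall _ _)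
  · exact ((isCompact_closedBall _ _).diff isOpen_ball).union (isCompact_closedBall _ _)
  · -- C₁ not in a gap of C₂
    rintro ⟨G, ⟨x, hx, rfl⟩, hsub⟩
    have hbC₁ : b ∈ C₁ := Or.inr (mem_closedBall_self (by norm_num))
    have hbH₂ : b ∈ ball b 4⁻¹ := mem_ball_self (by norm_num)
    have e1 : connectedComponentIn C₂ᶜ x = ball b 4⁻¹ := by
      rw [connectedComponentIn_eq (hsub hbC₁), compH₂ b hbH₂]
    set w : Fin n → ℝ := fun _ => 1 with hwdef
    have hw1 : ‖w‖ = 1 := by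
      rw [hwdef, pi_norm_const]; norm_num
    have hw2 : ‖w - b‖ = 9 := by
      have : w - b = fun _ => (-9 : ℝ) := by funext i; show (1:ℝ) - 10 = -9; norm_num
      rw [this, pi_norm_const]; norm_num
    have hwC₁ : w ∈ C₁ := by
      refine Or.inl ⟨?_, ?_⟩
      · rw [mem_closedBall, dist_zero_right, hw1]
      · rw [mem_ball, dist_zero_right, hw1]; norm_num
    have hwmem := hsub hwC₁
    rw [e1, mem_ball, dist_eq_norm, hw2] at hwmem
    norm_num at hwmem
  · -- C₂ not in a gap of C₁
    rintro ⟨G, ⟨x, hx, rfl⟩, hsub⟩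
    have h0C₂ : (0 : Fin n → ℝ) ∈ C₂ := Or.inr (mem_closedBall_self (by norm_num))
    have h0H₁ : (0 : Fin n → ℝ) ∈ ball (0 : Fin n → ℝ) 4⁻¹ := mem_ball_self (by norm_num)
    have e1 : connectedComponentIn C₁ᶜ x = ball (0 : Fin n → ℝ) 4⁻¹ := by
      rw [connectedComponentIn_eq (hsub h0C₂), compH₁ 0 h0H₁]
    set w : Fin n → ℝ := fun _ => 9 with hwdef
    have hw1 : ‖w‖ = 9 := by
      rw [hwdef, pi_norm_const]; norm_num
    have hw2 : ‖w - b‖ = 1 := by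
      have : w - b = fun _ => (-1 : ℝ) := by funext i; show (9:ℝ) - 10 = -1; norm_num
      rw [this, pi_norm_const]; norm_num
    have hwC₂ : w ∈ C₂ := by
      refine Or.inl ⟨?_, ?_⟩
      · rw [mem_closedBall, dist_eq_norm, hw2]
      · rw [mem_ball, dist_eq_norm, hw2]; norm_num
    have hwmem := hsub hwC₂
    rw [e1, mem_ball, dist_zero_right, hw1] at hwmem
    norm_num at hwmem
  · -- thickness product
    have h1 : (1 : ℝ≥0∞) < ENNReal.ofReal (3/2) * ENNReal.ofReal (3/2) := by
      rw [← ENNReal.ofReal_mul (by norm_num)]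
      rw [show (1 : ℝ≥0∞) = ENNReal.ofReal 1 by simp]
      rw [ENNReal.ofReal_lt_ofReal_iff (by norm_num)]
      norm_num
    exact lt_of_lt_of_le h1 (mul_le_mul' he₁ he₂)
  · -- disjointness
    rw [eq_empty_iff_forall_notMem]
    rintro x ⟨h1, h2⟩
    have hk := key10 x
    rcases h1 with ⟨ha, hb'⟩ | h1 <;> rcases h2 with ⟨hc, hd⟩ | h2
    · rw [mem_closedBall, dist_zero_right] at ha
      rw [mem_closedBall, dist_eq_norm] at hc
      linarith
    · rw [mem_closedBall, dist_zero_right] at ha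
      rw [mem_ball, dist_zero_right] at hb'
      rw [mem_closedBall, dist_zero_right] at h2
      exact hb' (by linarith)
    · rw [mem_closedBall, dist_eq_norm] at h1
      rw [mem_ball, dist_eq_norm] at hd
      rw [mem_closedBall, dist_eq_norm] at hc
      exact hd (by linarith)
    · rw [mem_closedBall, dist_eq_norm] at h1
      rw [mem_closedBall, dist_zero_right] at h2
      linarith
end

section
/- Let A be a diagonal n×n matrix with diagonal entries β₁₁,…,βₙₙ ∈ (0,1) and let C ⊆ B[0,1] be compact with τ_A(C) ≠ −∞. Then either C has only finitely many bounded gaps, or, for the enumeration (G_k)_{k∈ℕ} of the bounded gaps of C in non-increasing order of S_A, one has lim_{k→∞} S_A(G_k) = 0 and lim_{k→∞} diam(G_k) = 0. -/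
open Metric Set Topology Filter
open scoped ENNReal Classical

section AuxLemmas

open Bornology

variable {n : ℕ}

lemma aux_sizeWrt_nonneg (β : Fin n → ℝ) (F : Set (Fin n → ℝ)) : 0 ≤ sizeWrt β F :=
  Real.sInf_nonneg fun _ hx => hx.1.le

lemma aux_gapDist_nonneg (β : Fin n → ℝ) (C : Set (Fin n → ℝ)) (e : GapEnum β C) (m : ℕ) :
    0 ≤ gapDist β C e m :=
  Real.sInf_nonneg fun _ hx => hx.1.le

lemma aux_gapDist_le {β : Fin n → ℝ} {C : Set (Fin n → ℝ)} {e : GapEnum β C} {k : ℕ} {t : ℝ}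
    (ht : 0 < t)
    (h : ∃ z, (affBox β (1/t) z ∩ e.G k).Nonempty ∧
      (affBox β (1/t) z ∩ ((⋃ i ∈ e.J ∩ Iio k, e.G i) ∪ unboundedGap C)).Nonempty) :
    gapDist β C e k ≤ t :=
  csInf_le ⟨0, fun _ hx => hx.1.le⟩ ⟨ht, h⟩

lemma aux_pair_mem_affBox {β : Fin n → ℝ} {s ρ : ℝ}
    (hρ : ∀ j, ρ ≤ β j ^ s) {x y : Fin n → ℝ} (hxy : ∀ j, |x j - y j| ≤ 2 * ρ) :
    ∃ z, x ∈ affBox β s z ∧ y ∈ affBox β s z := by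
  refine ⟨fun j => (x j + y j) / 2, ?_, ?_⟩ <;>
    simp only [affBox, Set.mem_setOf_eq] <;> intro j
  · have h1 := hxy j; have h2 := hρ j
    have hh : |x j - (x j + y j) / 2| ≤ ρ := by
      rw [show x j - (x j + y j)/2 = (x j - y j)/2 by ring, abs_div, abs_two]
      linarith
    linarith
  · have h1 := hxy j; have h2 := hρ j
    have hh : |y j - (x j + y j) / 2| ≤ ρ := by
      rw [show y j - (x j + y j)/2 = (y j - x j)/2 by ring, abs_div, abs_two,
        abs_sub_comm]
      linarith
    linarith

lemma aux_mem_unboundedGap {C : Set (Fin n → ℝ)} (hC1 : C ⊆ closedBall 0 1)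
    {y : Fin n → ℝ} (hy : 1 < ‖y‖) : y ∈ unboundedGap C := by
  have hray : ∀ t : ℝ, 0 ≤ t → (1 + t) • y ∈ Cᶜ := by
    intro t ht
    simp only [Set.mem_compl_iff]
    intro hmem
    have h1 : ‖(1 + t) • y‖ = (1 + t) * ‖y‖ := by
      rw [norm_smul, Real.norm_eq_abs, abs_of_nonneg (by linarith)]
    have h3 := hC1 hmem
    rw [mem_closedBall, dist_zero_right, h1] at h3
    nlinarith
  have hyC : y ∈ Cᶜ := by simpa using hray 0 le_rfl
  set R : Set (Fin n → ℝ) := (fun t : ℝ => (1 + t) • y) '' Ici 0 with hR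
  have hcont : Continuous fun t : ℝ => (1 + t) • y :=
    (continuous_const.add continuous_id).smul continuous_const
  have hRconn : IsPreconnected R := isPreconnected_Ici.image _ hcont.continuousOn
  have hRsub : R ⊆ Cᶜ := by rintro _ ⟨t, ht, rfl⟩; exact hray t ht
  have hyR : y ∈ R := ⟨0, mem_Ici.mpr le_rfl, by simp⟩
  have hRcomp : R ⊆ connectedComponentIn Cᶜ y :=
    hRconn.subset_connectedComponentIn hyR hRsub
  refine ⟨hyC, fun hb => ?_⟩
  have hRb : IsBounded R := hb.subset hRcomp
  obtain ⟨r, hr⟩ := (isBounded_iff_subset_closedBall 0).mp hRb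
  set t := max r 0 with htdef
  have ht0 : (0:ℝ) ≤ t := le_max_right r 0
  have hmem : (1 + t) • y ∈ R := ⟨t, mem_Ici.mpr ht0, rfl⟩
  have h4 := hr hmem
  rw [mem_closedBall, dist_zero_right, norm_smul, Real.norm_eq_abs,
    abs_of_nonneg (by linarith)] at h4
  have h5 : (1 + t) * 1 < (1 + t) * ‖y‖ := by nlinarith
  linarith [le_max_left r 0]

lemma aux_boundedGap_subset {C G : Set (Fin n → ℝ)} (hC1 : C ⊆ closedBall 0 1)
    (hG : IsBoundedGap C G) : G ⊆ closedBall 0 1 := by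
  obtain ⟨⟨x, hx, rfl⟩, hb⟩ := hG
  intro y hy
  rw [mem_closedBall, dist_zero_right]
  by_contra h
  push_neg at h
  have h1 : y ∈ unboundedGap C := aux_mem_unboundedGap hC1 h
  have h2 : connectedComponentIn Cᶜ x = connectedComponentIn Cᶜ y :=
    connectedComponentIn_eq hy
  exact h1.2 (h2 ▸ hb)

end AuxLemmas

/-- if `τ_A(C) ≠ -∞` then either there are finitely many bounded
gaps, or both the sizes and the diameters of the gaps tend to zero. -/
theorem finitely_many_gaps_or_size_tendsto_zero (n : ℕ)
    (β : Fin n → ℝ) (hβ : ∀ j, β j ∈ Set.Ioo (0 : ℝ) 1)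
    (C : Set (Fin n → ℝ)) (hC : IsCompact C) (hC1 : C ⊆ closedBall 0 1)
    (e : GapEnum β C) (hτ : thicknessA β C e ≠ ⊥) :
    e.J.Finite ∨
      (Filter.Tendsto (fun k => sizeWrt β (e.G k)) Filter.atTop (nhds 0) ∧
        Filter.Tendsto (fun k => Metric.diam (e.G k)) Filter.atTop (nhds 0)) := by
  classical
  -- trivial case n = 0
  rcases Nat.eq_zero_or_pos n with hn | hn
  · subst hn
    right
    have hsize : ∀ G : Set (Fin 0 → ℝ), sizeWrt β G = 0 := by
      intro G
      have hset : {t : ℝ | 0 < t ∧ ∃ z, G ⊆ affBox β (1/t) z} = Ioi 0 := by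
        ext t
        simp only [Set.mem_setOf_eq, mem_Ioi, and_iff_left_iff_imp]
        intro _
        exact ⟨0, fun x _ j => j.elim0⟩
      rw [sizeWrt, hset, csInf_Ioi]
    have hdiam : ∀ G : Set (Fin 0 → ℝ), Metric.diam G = 0 := fun G =>
      Metric.diam_subsingleton (Set.subsingleton_of_subsingleton)
    constructor
    · simpa [hsize] using (tendsto_const_nhds : Tendsto (fun _ : ℕ => (0:ℝ)) atTop (nhds 0))
    · simpa [hdiam] using (tendsto_const_nhds : Tendsto (fun _ : ℕ => (0:ℝ)) atTop (nhds 0))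
  haveI : Nonempty (Fin n) := Fin.pos_iff_nonempty.mp hn
  by_cases hfin : e.J.Finite
  · exact Or.inl hfin
  right
  have hinf : e.J.Infinite := hfin
  have hJuniv : ∀ k : ℕ, k ∈ e.J := by
    intro k
    obtain ⟨l, hl, hkl⟩ := hinf.exists_gt k
    exact e.downward k l hkl.le hl
  have hJne : e.J ≠ ∅ := Set.Nonempty.ne_empty ⟨0, hJuniv 0⟩
  unfold thicknessA at hτ
  rw [if_neg hJne] at hτ
  by_cases hz : ∃ k ∈ e.J, gapDist β C e k = 0
  · rw [if_pos hz] at hτ; exact absurd rfl hτ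
  rw [if_neg hz] at hτ
  push_neg at hz
  have hgd_pos : ∀ k, 0 < gapDist β C e k := fun k =>
    lt_of_le_of_ne (aux_gapDist_nonneg β C e k) (Ne.symm (hz k (hJuniv k)))
  obtain ⟨M, hM⟩ : ∃ M : ℝ,
      ∀ k, (M : EReal) ≤ invE (sizeWrt β (e.G k)) - invE (gapDist β C e k) := by
    obtain ⟨M, _, hM2⟩ := EReal.exists_between_coe_real (Ne.bot_lt hτ)
    exact ⟨M, fun k => le_trans hM2.le (iInf₂_le k (hJuniv k))⟩
  -- min and max of β
  set m : ℝ := Finset.univ.inf' Finset.univ_nonempty β with hm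
  have hm_pos : 0 < m := (Finset.lt_inf'_iff _).mpr fun j _ => (hβ j).1
  have hm_le : ∀ j, m ≤ β j := fun j => Finset.inf'_le β (Finset.mem_univ j)
  have hm_lt1 : m < 1 :=
    lt_of_le_of_lt (hm_le (Classical.arbitrary _)) (hβ _).2
  set b : ℝ := Finset.univ.sup' Finset.univ_nonempty β with hb
  have hb_lt1 : b < 1 := (Finset.sup'_lt_iff _).mpr fun j _ => (hβ j).2
  have hb_pos : 0 < b :=
    lt_of_lt_of_le (hβ (Classical.arbitrary _)).1 (Finset.le_sup' β (Finset.mem_univ _))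
  have hβb : ∀ j, β j ≤ b := fun j => Finset.le_sup' β (Finset.mem_univ j)
  -- the gaps are nonempty; choose a point in each
  have hGne : ∀ k, (e.G k).Nonempty := by
    intro k
    obtain ⟨⟨p, hp, hEq⟩, _⟩ := e.isGap k (hJuniv k)
    exact ⟨p, hEq ▸ mem_connectedComponentIn hp⟩
  choose x hx using hGne
  -- KEY: for every L > 0 some gap has size < L
  have key : ∀ L : ℝ, 0 < L → ∃ N, sizeWrt β (e.G N) < L := by
    intro L hL
    by_contra hcon
    push_neg at hcon
    have hterm : ∀ k, (gapDist β C e k)⁻¹ ≤ L⁻¹ - M := by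
      intro k
      have hs := hcon k
      have hspos : 0 < sizeWrt β (e.G k) := lt_of_lt_of_le hL hs
      have hgd := hgd_pos k
      have hMk : (M:EReal) ≤
          (((sizeWrt β (e.G k))⁻¹ - (gapDist β C e k)⁻¹ : ℝ) : EReal) := by
        have h0 := hM k
        simp only [invE, if_neg hspos.ne', if_neg hgd.ne'] at h0
        rwa [← EReal.coe_sub] at h0
      rw [EReal.coe_le_coe_iff] at hMk
      have hinv : (sizeWrt β (e.G k))⁻¹ ≤ L⁻¹ := inv_anti₀ hL hs
      linarith
    have hKpos : 0 < L⁻¹ - M :=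
      lt_of_lt_of_le (inv_pos.mpr (hgd_pos 0)) (hterm 0)
    set δ : ℝ := (L⁻¹ - M)⁻¹ with hδdef
    have hδpos : 0 < δ := inv_pos.mpr hKpos
    have hgdδ : ∀ k, δ ≤ gapDist β C e k := fun k =>
      inv_le_of_inv_le₀ (hgd_pos k) (hterm k)
    set ρ : ℝ := m ^ (1/(δ/2)) with hρdef
    have hρpos : 0 < ρ := Real.rpow_pos_of_pos hm_pos _
    have hρβ : ∀ j, ρ ≤ β j ^ (1/(δ/2)) := fun j =>
      Real.rpow_le_rpow hm_pos.le (hm_le j) (by positivity)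
    have hsep : ∀ i k : ℕ, i < k → ¬ dist (x i) (x k) ≤ 2*ρ := by
      intro i k hik hd
      have hxy : ∀ j, |x i j - x k j| ≤ 2*ρ := fun j =>
        le_trans (by simpa [Real.dist_eq] using dist_le_pi_dist (x i) (x k) j) hd
      obtain ⟨z, hz1, hz2⟩ := aux_pair_mem_affBox hρβ hxy
      have hle : gapDist β C e k ≤ δ/2 :=
        aux_gapDist_le (by positivity)
          ⟨z, ⟨x k, hz2, hx k⟩,
            ⟨x i, hz1, Or.inl (Set.mem_biUnion ⟨hJuniv i, hik⟩ (hx i))⟩⟩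
      have := hgdδ k
      linarith
    have hxball : ∀ k, x k ∈ closedBall (0 : Fin n → ℝ) 1 := fun k =>
      aux_boundedGap_subset hC1 (e.isGap k (hJuniv k)) (hx k)
    have htb : TotallyBounded (closedBall (0 : Fin n → ℝ) 1) :=
      (isCompact_closedBall _ _).totallyBounded
    obtain ⟨t, htfin, htsub⟩ := totallyBounded_iff.mp htb ρ hρpos
    have hchoice : ∀ k : ℕ, ∃ c ∈ t, x k ∈ ball c ρ := by
      intro k
      have := htsub (hxball k)
      simpa using this
    choose c hc hcball using hchoice
    haveI := htfin.to_subtype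
    obtain ⟨i, k, hik, hik2⟩ :=
      Finite.exists_ne_map_eq_of_infinite (fun k : ℕ => (⟨c k, hc k⟩ : {y // y ∈ t}))
    have hcik : c i = c k := congrArg Subtype.val hik2
    have hd : dist (x i) (x k) < 2*ρ := by
      have t1 : dist (x i) (c i) < ρ := mem_ball.mp (hcball i)
      have t2 : dist (x k) (c k) < ρ := mem_ball.mp (hcball k)
      have t1' : dist (x i) (c k) < ρ := by rw [← hcik]; exact t1
      have t2' : dist (c k) (x k) < ρ := by rw [dist_comm]; exact t2
      have t3 : dist (x i) (x k) ≤ dist (x i) (c k) + dist (c k) (x k) :=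
        dist_triangle _ _ _
      linarith
    rcases Ne.lt_or_gt hik with h | h
    · exact hsep i k h hd.le
    · rw [dist_comm] at hd
      exact hsep k i h hd.le
  have hanti : ∀ i k : ℕ, i ≤ k → sizeWrt β (e.G k) ≤ sizeWrt β (e.G i) :=
    fun i k h => e.anti i (hJuniv i) k (hJuniv k) h
  -- every gap set of admissible parameters is nonempty
  have hSne : ∀ k, {t : ℝ | 0 < t ∧ ∃ z, e.G k ⊆ affBox β (1/t) z}.Nonempty := by
    intro k
    set δ : ℝ := gapDist β C e k with hδ
    have hδpos : 0 < δ := hgd_pos k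
    set ρ : ℝ := m ^ (1/(δ/2)) with hρ2
    have hρpos : 0 < ρ := Real.rpow_pos_of_pos hm_pos _
    have hρlt1 : ρ < 1 := Real.rpow_lt_one hm_pos.le hm_lt1 (by positivity)
    have hρβ : ∀ j, ρ ≤ β j ^ (1/(δ/2)) := fun j =>
      Real.rpow_le_rpow hm_pos.le (hm_le j) (by positivity)
    have hbound : ∀ u ∈ e.G k, ∀ j, |u j| ≤ 1 - ρ := by
      intro u hu j
      by_contra hcon
      push_neg at hcon
      set s : ℝ := if 0 ≤ u j then 1 else -1 with hs
      set y : Fin n → ℝ := Function.update u j (u j + 2*ρ*s) with hy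
      have hyj : 1 < |y j| := by
        rw [hy, Function.update_self]
        rcases le_or_gt 0 (u j) with h | h
        · rw [hs, if_pos h]
          rw [abs_of_nonneg (by linarith)]
          have habs : |u j| = u j := abs_of_nonneg h
          rw [habs] at hcon
          linarith
        · rw [hs, if_neg (not_le.mpr h)]
          rw [abs_of_nonpos (by linarith)]
          have habs : |u j| = -u j := abs_of_neg h
          rw [habs] at hcon
          linarith
      have hdist : ∀ j', |u j' - y j'| ≤ 2*ρ := by
        intro j'
        by_cases hj : j' = j
        · subst hj
          rw [hy, Function.update_self]
          have hsabs : |s| = 1 := by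
            rw [hs]; split <;> simp
          rw [show u j' - (u j' + 2*ρ*s) = -(2*ρ*s) by ring, abs_neg, abs_mul,
            hsabs, mul_one, abs_of_nonneg (by positivity)]
        · rw [hy, Function.update_of_ne hj]
          simp [hρpos.le]
      obtain ⟨z, hz1, hz2⟩ := aux_pair_mem_affBox hρβ hdist
      have hynorm : 1 < ‖y‖ := lt_of_lt_of_le hyj (norm_le_pi_norm y j)
      have hyE : y ∈ unboundedGap C := aux_mem_unboundedGap hC1 hynorm
      have hle : gapDist β C e k ≤ δ/2 :=
        aux_gapDist_le (by positivity) ⟨z, ⟨u, hz1, hu⟩, ⟨y, hz2, Or.inr hyE⟩⟩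
      rw [← hδ] at hle
      linarith
    have h1ρpos : 0 < 1 - ρ := by linarith
    set X : ℝ := Real.logb m (1 - ρ) with hX
    have hXpos : 0 < X :=
      Real.logb_pos_of_base_lt_one hm_pos hm_lt1 h1ρpos (by linarith)
    refine ⟨1/X, by positivity, 0, ?_⟩
    rw [one_div_one_div]
    intro u hu
    simp only [affBox, Set.mem_setOf_eq]
    intro j
    have h1 : m ^ X = 1 - ρ := Real.rpow_logb hm_pos (ne_of_lt hm_lt1) h1ρpos
    have h2 : m ^ X ≤ β j ^ X := Real.rpow_le_rpow hm_pos.le (hm_le j) hXpos.le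
    have h3 := hbound u hu j
    simp only [Pi.zero_apply, sub_zero]
    linarith
  constructor
  · rw [Metric.tendsto_atTop]
    intro ε hε
    obtain ⟨N, hN⟩ := key ε hε
    refine ⟨N, fun k hk => ?_⟩
    have h1 : sizeWrt β (e.G k) ≤ sizeWrt β (e.G N) := hanti N k hk
    have h2 : 0 ≤ sizeWrt β (e.G k) := aux_sizeWrt_nonneg β _
    rw [Real.dist_eq, sub_zero, abs_of_nonneg h2]
    linarith
  · rw [Metric.tendsto_atTop]
    intro ε hε
    obtain ⟨p, hp⟩ := exists_pow_lt_of_lt_one (half_pos hε) hb_lt1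
    set q : ℕ := p + 1 with hq
    have hqb : b ^ q < ε/2 := by
      calc b ^ q = b ^ p * b := pow_succ b p
        _ ≤ b ^ p * 1 := by nlinarith [pow_pos hb_pos p]
        _ = b ^ p := mul_one _
        _ < ε/2 := hp
    have hqpos : (0:ℝ) < (q:ℝ) := by positivity
    set t₀ : ℝ := 1 / (q:ℝ) with ht₀
    have ht₀pos : 0 < t₀ := by positivity
    obtain ⟨N, hN⟩ := key t₀ ht₀pos
    refine ⟨N, fun k hk => ?_⟩
    have hsk : sizeWrt β (e.G k) < t₀ := lt_of_le_of_lt (hanti N k hk) hN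
    have hbdd : BddBelow {t : ℝ | 0 < t ∧ ∃ z, e.G k ⊆ affBox β (1/t) z} :=
      ⟨0, fun _ hx' => hx'.1.le⟩
    obtain ⟨t, ⟨htpos, z, hboxsub⟩, hlt⟩ :=
      (csInf_lt_iff hbdd (hSne k)).mp hsk
    have hexp : (q:ℝ) ≤ 1/t := by
      have h1 : 1/t₀ ≤ 1/t := one_div_le_one_div_of_le htpos hlt.le
      rw [ht₀, one_div_one_div] at h1
      exact h1
    have hβmono : ∀ j, β j ^ (1/t) ≤ b ^ q := by
      intro j
      calc β j ^ (1/t) ≤ b ^ (1/t) :=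
            Real.rpow_le_rpow (hβ j).1.le (hβb j) (by positivity)
        _ ≤ b ^ ((q:ℕ):ℝ) :=
            Real.rpow_le_rpow_of_exponent_ge hb_pos hb_lt1.le hexp
        _ = b ^ q := Real.rpow_natCast b q
    have hdiamle : Metric.diam (e.G k) ≤ 2 * b ^ q := by
      apply Metric.diam_le_of_forall_dist_le (by positivity)
      intro u hu v hv
      rw [dist_pi_le_iff (by positivity)]
      intro j
      have h1 := hboxsub hu j
      have h2 := hboxsub hv j
      have h3 := hβmono j
      rw [Real.dist_eq]
      calc |u j - v j| ≤ |u j - z j| + |z j - v j| := abs_sub_le _ _ _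
        _ = |u j - z j| + |v j - z j| := by rw [abs_sub_comm (z j)]
        _ ≤ 2 * b ^ q := by linarith
    have hdge : 0 ≤ Metric.diam (e.G k) := Metric.diam_nonneg
    rw [Real.dist_eq, sub_zero, abs_of_nonneg hdge]
    linarith
end

section
/- Let A be a diagonal n×n matrix with diagonal entries in (0,1) and let C₁, C₂ ⊆ B[0,1] be nonempty compact sets with τ_A(C₁) + τ_A(C₂) > 0. Denote by (G_k¹)_{k∈J₁} and (G_k²)_{k∈J₂} the bounded gaps of C₁ and C₂ respectively, each enumerated in non-increasing order of S_A. Then for every s ∈ J₁ and t ∈ J₂ it is not the case that both GD_A(s,C₁) ≤ S_A(G_t²) and GD_A(t,C₂) ≤ S_A(G_s¹) hold simultaneously. -/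
open Metric Set Topology Filter
open scoped ENNReal Classical

/-- if `τ_A(C₁) + τ_A(C₂) > 0` then `GD_A(s,C₁) ≤ S_A(G_t²)` and
`GD_A(t,C₂) ≤ S_A(G_s¹)` cannot hold simultaneously. -/
theorem not_both_gapDist_le_size (n : ℕ)
    (β : Fin n → ℝ) (hβ : ∀ j, β j ∈ Set.Ioo (0 : ℝ) 1)
    (C₁ C₂ : Set (Fin n → ℝ)) (hC₁ : IsCompact C₁) (hC₂ : IsCompact C₂)
    (hne₁ : C₁.Nonempty) (hne₂ : C₂.Nonempty)
    (hsub₁ : C₁ ⊆ closedBall 0 1) (hsub₂ : C₂ ⊆ closedBall 0 1)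
    (e₁ : GapEnum β C₁) (e₂ : GapEnum β C₂)
    (hτ : 0 < thicknessA β C₁ e₁ + thicknessA β C₂ e₂) :
    ∀ s ∈ e₁.J, ∀ t ∈ e₂.J,
      ¬ (gapDist β C₁ e₁ s ≤ sizeWrt β (e₂.G t) ∧
          gapDist β C₂ e₂ t ≤ sizeWrt β (e₁.G s)) := by

  intro s hs t ht hboth
  obtain ⟨h1, h2⟩ := hboth
  have hJ1 : e₁.J ≠ ∅ := (Set.nonempty_of_mem hs).ne_empty
  have hJ2 : e₂.J ≠ ∅ := (Set.nonempty_of_mem ht).ne_empty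
  by_cases hz1 : ∃ k ∈ e₁.J, gapDist β C₁ e₁ k = 0
  · rw [thicknessA, if_neg hJ1, if_pos hz1, EReal.bot_add] at hτ
    exact absurd hτ (by simp)
  by_cases hz2 : ∃ k ∈ e₂.J, gapDist β C₂ e₂ k = 0
  · rw [show thicknessA β C₂ e₂ = ⊥ by rw [thicknessA, if_neg hJ2, if_pos hz2],
      EReal.add_bot] at hτ
    exact absurd hτ (by simp)
  have hz1' := hz1; have hz2' := hz2
  push_neg at hz1' hz2'
  have hg1nn : 0 ≤ gapDist β C₁ e₁ s := Real.sInf_nonneg (fun x hx => hx.1.le)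
  have hg2nn : 0 ≤ gapDist β C₂ e₂ t := Real.sInf_nonneg (fun x hx => hx.1.le)
  have hg1 : 0 < gapDist β C₁ e₁ s := hg1nn.lt_of_ne' (hz1' s hs)
  have hg2 : 0 < gapDist β C₂ e₂ t := hg2nn.lt_of_ne' (hz2' t ht)
  have ha2 : 0 < sizeWrt β (e₂.G t) := lt_of_lt_of_le hg1 h1
  have ha1 : 0 < sizeWrt β (e₁.G s) := lt_of_lt_of_le hg2 h2
  have hτ1 : thicknessA β C₁ e₁ ≤
      invE (sizeWrt β (e₁.G s)) - invE (gapDist β C₁ e₁ s) := by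
    rw [thicknessA, if_neg hJ1, if_neg hz1]
    exact iInf₂_le s hs
  have hτ2 : thicknessA β C₂ e₂ ≤
      invE (sizeWrt β (e₂.G t)) - invE (gapDist β C₂ e₂ t) := by
    rw [thicknessA, if_neg hJ2, if_neg hz2]
    exact iInf₂_le t ht
  have heq1 : invE (sizeWrt β (e₁.G s)) - invE (gapDist β C₁ e₁ s)
      = (((sizeWrt β (e₁.G s))⁻¹ - (gapDist β C₁ e₁ s)⁻¹ : ℝ) : EReal) := by
    rw [invE, if_neg ha1.ne', invE, if_neg hg1.ne', ← EReal.coe_sub]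
  have heq2 : invE (sizeWrt β (e₂.G t)) - invE (gapDist β C₂ e₂ t)
      = (((sizeWrt β (e₂.G t))⁻¹ - (gapDist β C₂ e₂ t)⁻¹ : ℝ) : EReal) := by
    rw [invE, if_neg ha2.ne', invE, if_neg hg2.ne', ← EReal.coe_sub]
  have hi1 : (sizeWrt β (e₂.G t))⁻¹ ≤ (gapDist β C₁ e₁ s)⁻¹ :=
    inv_anti₀ hg1 h1
  have hi2 : (sizeWrt β (e₁.G s))⁻¹ ≤ (gapDist β C₂ e₂ t)⁻¹ :=
    inv_anti₀ hg2 h2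
  have hreal : ((sizeWrt β (e₁.G s))⁻¹ - (gapDist β C₁ e₁ s)⁻¹)
      + ((sizeWrt β (e₂.G t))⁻¹ - (gapDist β C₂ e₂ t)⁻¹) ≤ (0:ℝ) := by linarith
  have hsum : thicknessA β C₁ e₁ + thicknessA β C₂ e₂ ≤ (0 : EReal) := by
    calc thicknessA β C₁ e₁ + thicknessA β C₂ e₂
        ≤ (((sizeWrt β (e₁.G s))⁻¹ - (gapDist β C₁ e₁ s)⁻¹ : ℝ) : EReal)
          + (((sizeWrt β (e₂.G t))⁻¹ - (gapDist β C₂ e₂ t)⁻¹ : ℝ) : EReal) :=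
          add_le_add (heq1 ▸ hτ1) (heq2 ▸ hτ2)
      _ = ((((sizeWrt β (e₁.G s))⁻¹ - (gapDist β C₁ e₁ s)⁻¹)
          + ((sizeWrt β (e₂.G t))⁻¹ - (gapDist β C₂ e₂ t)⁻¹) : ℝ) : EReal) := by
          rw [EReal.coe_add]
      _ ≤ ((0:ℝ) : EReal) := by exact_mod_cast hreal
      _ = 0 := by norm_num
  exact absurd (hτ.trans_le hsum) (lt_irrefl 0)
end

section
/- Let X be a topological space, let U ⊆ X be an open connected set and let V ⊆ X be an open set. If U ∩ V ≠ ∅, U ∩ ∂V = ∅ and ∂U ∩ ∂V = ∅, then the closure of U is contained in V. -/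
/-- if `U` is open and connected, `V` is open, `U ∩ V ≠ ∅`,
`U ∩ ∂V = ∅` and `∂U ∩ ∂V = ∅`, then `closure U ⊆ V`. -/
theorem closure_subset_of_open_connected {X : Type*} [TopologicalSpace X]
    (U V : Set X) (hUopen : IsOpen U) (hUconn : IsConnected U) (hVopen : IsOpen V)
    (h1 : (U ∩ V).Nonempty) (h2 : U ∩ frontier V = ∅) (h3 : frontier U ∩ frontier V = ∅) :
    closure U ⊆ V := by
  -- U ⊆ V ∪ (closure V)ᶜ
  have hcover : U ⊆ V ∪ (closure V)ᶜ := by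
    intro x hx
    by_cases hxc : x ∈ closure V
    · left
      have hxf : x ∉ frontier V := fun hf => Set.eq_empty_iff_forall_notMem.mp h2 x ⟨hx, hf⟩
      rw [frontier, Set.mem_diff, hVopen.interior_eq] at hxf
      push_neg at hxf
      exact hxf hxc
    · exact Or.inr hxc
  have hUV : U ⊆ V := by
    by_contra h
    obtain ⟨y, hyU, hyV⟩ := Set.not_subset.mp h
    have hyc : y ∈ (closure V)ᶜ := (hcover hyU).resolve_left hyV
    obtain ⟨z, hz⟩ := hUconn.isPreconnected V (closure V)ᶜ hVopen
      isClosed_closure.isOpen_compl hcover ⟨_, h1.choose_spec.1, h1.choose_spec.2⟩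
      ⟨y, hyU, hyc⟩
    exact hz.2.2 (subset_closure hz.2.1)
  intro x hx
  by_cases hxU : x ∈ U
  · exact hUV hxU
  · have hxf : x ∈ frontier U := ⟨hx, by rwa [hUopen.interior_eq]⟩
    have hxcV : x ∈ closure V := closure_mono hUV hx
    by_contra hxV
    exact Set.eq_empty_iff_forall_notMem.mp h3 x ⟨hxf, hxcV, by rwa [hVopen.interior_eq]⟩
end

section
/- Let A be a diagonal n×n matrix with diagonal entries β₁₁,…,βₙₙ ∈ (0,1), and let C₁, C₂ ⊆ B[0,1] be nonempty compact sets which are BG linked and satisfy τ_A(C₁) + τ_A(C₂) > 0. Assume further that C₁ ∩ C₂ = ∅ and that there exist a bounded gap G¹ of C₁ with ∂G¹ ⊄ E² (the unbounded gap of C₂) and a bounded gap G² of C₂ with ∂G² ⊄ E¹ (the unbounded gap of C₁). Then there exists a sequence of pairs (G¹_{s_i}, G²_{t_i})_{i∈ℕ} of linked bounded gaps of C₁ and C₂, with s_i, t_i ∈ ℕ, such that for every i either s_{i+1} = s_i and t_{i+1} > t_i, or s_{i+1} > s_i and t_{i+1} = t_i; moreover at least one of diam(G¹_{s_i}) → 0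 or diam(G²_{t_i}) → 0 as i → ∞. -/
open Metric Set Topology Filter
open scoped ENNReal Classical

/-!
A frontier point of `G¹` that is not in `E²` lies in a bounded gap of `C₂`, which is then linked
to `G¹`: this gives a first linked pair. Suppose a linked pair `(G¹_s, G²_t)` had no successor,
i.e. `G¹_s` is linked to no later gap of `C₂` and `G²_t` to no later gap of `C₁`. Then the
frontier of `G¹_s` is covered by `G²_j`, `j ≤ t`, and `E²`, so any box containing `G¹_s` meets
`G²_t` and an earlier gap or `E²`: `GD_A(t, C₂) ≤ S_A(G¹_s)`, and symmetrically
`GD_A(s, C₁) ≤ S_A(G²_t)`. The corresponding terms of `τ_A(C₁)` and `τ_A(C₂)` then sum to at most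
`0`, contradicting `τ_A(C₁) + τ_A(C₂) > 0`. Iterating, one of the two indices tends to infinity,
and since positive thickness allows only finitely many gaps of size at least `L` for each `L > 0`,
the diameters of those gaps tend to `0`.
-/

variable {n : ℕ} {β : Fin n → ℝ}

theorem Linked.symm {U V : Set (Fin n → ℝ)} (h : Linked U V) : Linked V U :=
  ⟨Set.inter_comm U V ▸ h.1, h.2.2, h.2.1⟩

theorem BGLinked.symm {C₁ C₂ : Set (Fin n → ℝ)} (h : BGLinked C₁ C₂) : BGLinked C₂ C₁ :=
  fun G₂ G₁ hG₂ hG₁ => (h G₁ G₂ hG₁ hG₂).imp Linked.symm fun h' => Set.inter_comm G₂ G₁ ▸ h'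

namespace IsGap

variable {C G : Set (Fin n → ℝ)}

theorem isOpen (hC : IsClosed C) (h : IsGap C G) : IsOpen G := by
  obtain ⟨x, -, rfl⟩ := h
  exact hC.isOpen_compl.connectedComponentIn

theorem nonempty (h : IsGap C G) : G.Nonempty := by
  obtain ⟨x, hx, rfl⟩ := h
  exact ⟨x, mem_connectedComponentIn hx⟩

theorem frontier_subset (hC : IsClosed C) (h : IsGap C G) : frontier G ⊆ C := by
  intro y hy
  by_contra hyC
  have hGo := h.isOpen hC
  obtain ⟨x, -, rfl⟩ := h
  have hyG : y ∈ connectedComponentIn Cᶜ x := by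
    obtain ⟨w, hwy, hwx⟩ := mem_closure_iff.1 hy.1 _
      hC.isOpen_compl.connectedComponentIn (mem_connectedComponentIn hyC)
    rw [connectedComponentIn_eq hwx, ← connectedComponentIn_eq hwy]
    exact mem_connectedComponentIn hyC
  exact hy.2 (hGo.interior_eq.symm ▸ hyG)

end IsGap

theorem mem_unboundedGap_of_one_lt_norm {C : Set (Fin n → ℝ)} (hsub : C ⊆ closedBall 0 1)
    {y : Fin n → ℝ} (hy : 1 < ‖y‖) : y ∈ unboundedGap C := by
  have hray : ∀ s ∈ Ici (1 : ℝ), s • y ∉ C := fun s (hs : 1 ≤ s) hsC => by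
    have := mem_closedBall_zero_iff.1 (hsub hsC)
    rw [norm_smul, Real.norm_of_nonneg (by linarith)] at this
    nlinarith
  refine ⟨by simpa using hray 1 self_mem_Ici, fun hb => ?_⟩
  -- the ray `{s • y | s ≥ 1}` is connected, avoids `C` and is unbounded
  have hsub_comp : (· • y) '' Ici (1 : ℝ) ⊆ connectedComponentIn Cᶜ y :=
    (isPreconnected_Ici.image _ (continuous_id.smul continuous_const).continuousOn)
      |>.subset_connectedComponentIn ⟨1, self_mem_Ici, one_smul ℝ y⟩
        (by rintro - ⟨s, hs, rfl⟩; exact hray s hs)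
  obtain ⟨R, hR⟩ := (isBounded_iff_subset_closedBall 0).1 (hb.subset hsub_comp)
  have h := mem_closedBall_zero_iff.1 (hR ⟨max 1 (R + 1), mem_Ici.2 (le_max_left _ _), rfl⟩)
  rw [norm_smul, Real.norm_of_nonneg (by positivity)] at h
  nlinarith [le_max_left 1 (R + 1), le_max_right 1 (R + 1)]

theorem IsBoundedGap.subset_closedBall {C G : Set (Fin n → ℝ)} (hsub : C ⊆ closedBall 0 1)
    (h : IsBoundedGap C G) : G ⊆ closedBall 0 1 := by
  obtain ⟨⟨x, -, rfl⟩, hbdd⟩ := h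
  intro y hy
  by_contra hy'
  exact (mem_unboundedGap_of_one_lt_norm hsub (by simpa using hy')).2
    (connectedComponentIn_eq hy ▸ hbdd)

theorem GapEnum.exists_mem_of_notMem_unboundedGap {C : Set (Fin n → ℝ)} (e : GapEnum β C)
    {x : Fin n → ℝ} (hxC : x ∉ C) (hxE : x ∉ unboundedGap C) : ∃ j ∈ e.J, x ∈ e.G j := by
  have hbdd : Bornology.IsBounded (connectedComponentIn Cᶜ x) := by
    by_contra hb
    exact hxE ⟨hxC, hb⟩
  obtain ⟨j, hj, hGj⟩ := e.surj _ ⟨⟨x, hxC, rfl⟩, hbdd⟩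
  exact ⟨j, hj, hGj ▸ mem_connectedComponentIn hxC⟩

section Linking

variable {C₁ C₂ G : Set (Fin n → ℝ)}

theorem exists_linked_of_mem_frontier (hC₁ : IsClosed C₁) (hC₂ : IsClosed C₂)
    (hdisj : Disjoint C₁ C₂) (hBG : BGLinked C₁ C₂) (e₂ : GapEnum β C₂)
    (hG : IsBoundedGap C₁ G) {x : Fin n → ℝ} (hx : x ∈ frontier G)
    (hxE : x ∉ unboundedGap C₂) : ∃ j ∈ e₂.J, x ∈ e₂.G j ∧ Linked G (e₂.G j) := by
  have hxC₂ : x ∉ C₂ := hdisj.notMem_of_mem_left (hG.1.frontier_subset hC₁ hx)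
  obtain ⟨j, hj, hxj⟩ := e₂.exists_mem_of_notMem_unboundedGap hxC₂ hxE
  have hmeet : (e₂.G j ∩ G).Nonempty :=
    mem_closure_iff.1 (frontier_subset_closure hx) _ ((e₂.isGap j hj).1.isOpen hC₂) hxj
  exact ⟨j, hj, hxj, (hBG G (e₂.G j) hG (e₂.isGap j hj)).resolve_right fun h =>
    hmeet.ne_empty ((Set.inter_comm _ _).trans h)⟩

theorem frontier_subset_of_forall_not_linked (hC₁ : IsClosed C₁) (hC₂ : IsClosed C₂)
    (hdisj : Disjoint C₁ C₂) (hBG : BGLinked C₁ C₂) (e₂ : GapEnum β C₂)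
    (hG : IsBoundedGap C₁ G) {t : ℕ} (hnot : ∀ j ∈ e₂.J, t < j → ¬ Linked G (e₂.G j)) :
    frontier G ⊆ (⋃ j ∈ e₂.J ∩ Iic t, e₂.G j) ∪ unboundedGap C₂ := by
  intro x hx
  by_cases hxE : x ∈ unboundedGap C₂
  · exact Or.inr hxE
  obtain ⟨j, hj, hxj, hL⟩ := exists_linked_of_mem_frontier hC₁ hC₂ hdisj hBG e₂ hG hx hxE
  exact Or.inl (mem_biUnion ⟨hj, not_lt.1 fun h => hnot j hj h hL⟩ hxj)

end Linking

theorem affBox_eq_pi (s : ℝ) (z : Fin n → ℝ) :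
    affBox β s z = univ.pi fun j => closedBall (z j) (β j ^ s) := by
  ext x
  simp [affBox, Real.dist_eq]

theorem isClosed_affBox (s : ℝ) (z : Fin n → ℝ) : IsClosed (affBox β s z) := by
  rw [affBox_eq_pi]
  exact isClosed_set_pi fun j _ => isClosed_closedBall

theorem affBox_mem_nhds (hβ : ∀ j, 0 < β j) (s : ℝ) (z : Fin n → ℝ) : affBox β s z ∈ 𝓝 z := by
  rw [affBox_eq_pi]
  exact set_pi_mem_nhds finite_univ fun j _ =>
    closedBall_mem_nhds _ (Real.rpow_pos_of_pos (hβ j) s)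

theorem self_mem_affBox (hβ : ∀ j, 0 < β j) (s : ℝ) (z : Fin n → ℝ) : z ∈ affBox β s z :=
  mem_of_mem_nhds (affBox_mem_nhds hβ s z)

theorem update_mem_affBox (hβ : ∀ j, 0 < β j) {s : ℝ} (z : Fin n → ℝ) {j : Fin n} {a : ℝ}
    (ha : |a| ≤ β j ^ s) : Function.update z j (z j + a) ∈ affBox β s z := by
  intro i
  rcases eq_or_ne i j with rfl | hij
  · simpa using ha
  · simpa [hij] using (Real.rpow_pos_of_pos (hβ i) s).le

theorem eventually_forall_dist_le_of_mem_affBox (hβ : ∀ j, β j ∈ Ioo (0 : ℝ) 1) {ε : ℝ}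
    (hε : 0 < ε) : ∀ᶠ u in 𝓝[>] 0, ∀ z, ∀ x ∈ affBox β (1 / u) z, ∀ y ∈ affBox β (1 / u) z,
      dist x y ≤ ε := by
  have hsmall : ∀ j, ∀ᶠ u in 𝓝[>] (0 : ℝ), β j ^ (1 / u) < ε / 2 := fun j =>
    ((tendsto_rpow_atTop_of_base_lt_one _ (by linarith [(hβ j).1]) (hβ j).2).comp
      (tendsto_inv_nhdsGT_zero.congr fun u => (one_div u).symm)).eventually
      (gt_mem_nhds (by positivity))
  filter_upwards [eventually_all.2 hsmall] with u hu z x hx y hy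
  refine (dist_pi_le_iff hε.le).2 fun j => ?_
  rw [Real.dist_eq]
  linarith [abs_sub_le (x j) (z j) (y j), abs_sub_comm (z j) (y j), hx j, hy j, hu j]

theorem finite_of_forall_notMem_affBox (hβ : ∀ j, 0 < β j) {K : Set (Fin n → ℝ)}
    (hK : IsCompact K) {T : Set ℕ} {p : ℕ → Fin n → ℝ} (hp : ∀ k ∈ T, p k ∈ K) (s : ℝ)
    (hsep : ∀ k ∈ T, ∀ l ∈ T, k < l → ∀ z, p k ∈ affBox β s z → p l ∉ affBox β s z) :
    T.Finite := by
  by_contra hT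
  have hTmem := Nat.nth_mem_of_infinite (p := (· ∈ T)) hT
  obtain ⟨z, -, φ, hφ, hlim⟩ := hK.tendsto_subseq fun i => hp _ (hTmem i)
  obtain ⟨N, hN⟩ := eventually_atTop.1 (hlim.eventually (affBox_mem_nhds hβ s z))
  exact hsep _ (hTmem _) _ (hTmem _) (Nat.nth_strictMono hT (hφ N.lt_succ_self)) z
    (hN N le_rfl) (hN (N + 1) N.le_succ)

-- The sets whose infima are `sizeWrt β F` and `gapDist β C e m`.
def sizeSet (β : Fin n → ℝ) (F : Set (Fin n → ℝ)) : Set ℝ :=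
  {t | 0 < t ∧ ∃ z, F ⊆ affBox β (1 / t) z}

def gapDistSet (β : Fin n → ℝ) (C : Set (Fin n → ℝ)) (e : GapEnum β C) (m : ℕ) : Set ℝ :=
  {t | 0 < t ∧ ∃ z, (affBox β (1 / t) z ∩ e.G m).Nonempty ∧
    (affBox β (1 / t) z ∩ ((⋃ i ∈ e.J ∩ Iio m, e.G i) ∪ unboundedGap C)).Nonempty}

section GapEnum

variable {C : Set (Fin n → ℝ)} {e : GapEnum β C}

theorem gapDist_le {m : ℕ} {u : ℝ} (hu : u ∈ gapDistSet β C e m) : gapDist β C e m ≤ u :=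
  csInf_le ⟨0, fun _ ht => ht.1.le⟩ hu

/-- A box of size below the gap distance around a point of `G_k` cannot reach `E`, so `G_k` keeps
a margin from the boundary of the unit ball and fits into a box of finite size. -/
theorem sizeSet_nonempty_of_gapDist_pos (hβ : ∀ j, β j ∈ Ioo (0 : ℝ) 1)
    (hsub : C ⊆ closedBall 0 1) {k : ℕ} (hGD : 0 < gapDist β C e k) :
    (sizeSet β (e.G k)).Nonempty := by
  obtain ⟨u, hu, huGD⟩ : ∃ u, 0 < u ∧ u < gapDist β C e k := ⟨_, half_pos hGD, half_lt_self hGD⟩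
  have hβ₀ : ∀ j, 0 < β j := fun j => (hβ j).1
  have hball : ∀ x ∈ e.G k, ∀ y ∈ affBox β (1 / u) x, ‖y‖ ≤ 1 := by
    intro x hx y hy
    by_contra hy1
    have hyE := mem_unboundedGap_of_one_lt_norm hsub (not_le.1 hy1)
    linarith [gapDist_le (e := e) ⟨hu, x, ⟨x, self_mem_affBox hβ₀ _ x, hx⟩, y, hy, Or.inr hyE⟩]
  have hcoord : ∀ x ∈ e.G k, ∀ j, |x j| ≤ 1 - β j ^ (1 / u) := by
    intro x hx j
    have hr : |β j ^ (1 / u)| ≤ β j ^ (1 / u) := (abs_of_pos (Real.rpow_pos_of_pos (hβ₀ j) _)).le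
    have hr' : |-β j ^ (1 / u)| ≤ β j ^ (1 / u) := by rwa [abs_neg]
    have hup := (norm_le_pi_norm _ j).trans (hball x hx _ (update_mem_affBox hβ₀ x hr))
    have hdown := (norm_le_pi_norm _ j).trans (hball x hx _ (update_mem_affBox hβ₀ x hr'))
    simp only [Function.update_self, Real.norm_eq_abs] at hup hdown
    rw [abs_le] at hup hdown ⊢
    constructor <;> linarith [hup.1, hup.2, hdown.1, hdown.2]
  have hlarge : ∀ j, ∀ᶠ v : ℝ in atTop, 1 - β j ^ (1 / u) < β j ^ (1 / v) := by
    intro j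
    have hlim : Tendsto (fun v : ℝ => β j ^ (1 / v)) atTop (𝓝 (β j ^ (0 : ℝ))) :=
      (Real.continuousAt_const_rpow (hβ₀ j).ne').tendsto.comp
        (tendsto_const_nhds.div_atTop tendsto_id)
    rw [Real.rpow_zero] at hlim
    exact hlim.eventually (lt_mem_nhds (by linarith [Real.rpow_pos_of_pos (hβ₀ j) (1 / u)]))
  obtain ⟨v, hv, hv₀⟩ := ((eventually_all.2 hlarge).and (eventually_gt_atTop 0)).exists
  refine ⟨v, hv₀, 0, fun x hx j => ?_⟩
  simpa using (hcoord x hx j).trans (hv j).le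

theorem gapDist_pos_of_thicknessA_ne_bot (hτ : thicknessA β C e ≠ ⊥) {k : ℕ} (hk : k ∈ e.J) :
    0 < gapDist β C e k := by
  refine (Real.sInf_nonneg fun _ ht => ht.1.le).lt_of_ne fun h => hτ ?_
  rw [thicknessA, if_neg (nonempty_iff_ne_empty.1 ⟨k, hk⟩), if_pos ⟨k, hk, h.symm⟩]

theorem thicknessA_le_coe (hτ : thicknessA β C e ≠ ⊥) {k : ℕ} (hk : k ∈ e.J)
    (hS : 0 < sizeWrt β (e.G k)) :
    thicknessA β C e ≤ (((sizeWrt β (e.G k))⁻¹ - (gapDist β C e k)⁻¹ : ℝ) : EReal) := by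
  have hGD : ¬ ∃ l ∈ e.J, gapDist β C e l = 0 := fun ⟨l, hl, h⟩ =>
    (gapDist_pos_of_thicknessA_ne_bot hτ hl).ne' h
  rw [thicknessA, if_neg (nonempty_iff_ne_empty.1 ⟨k, hk⟩), if_neg hGD]
  refine (iInf₂_le k hk).trans_eq ?_
  rw [invE, if_neg hS.ne', invE, if_neg (gapDist_pos_of_thicknessA_ne_bot hτ hk).ne',
    EReal.coe_sub]

/-- Large gaps are at uniformly positive gap distance, so a box of half that size never holds
points of two of them; by compactness there are only finitely many. -/
theorem finite_setOf_le_sizeWrt (hβ : ∀ j, β j ∈ Ioo (0 : ℝ) 1) (hsub : C ⊆ closedBall 0 1)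
    (hτ : thicknessA β C e ≠ ⊥) {L : ℝ} (hL : 0 < L) :
    {k | k ∈ e.J ∧ L ≤ sizeWrt β (e.G k)}.Finite := by
  obtain ⟨c, hc₀, hcτ⟩ : ∃ c : ℝ, c ≤ 0 ∧ (c : EReal) ≤ thicknessA β C e :=
    ⟨_, min_le_right _ 0, (EReal.coe_le_coe_iff.2 (min_le_left _ _)).trans (EReal.coe_toReal_le hτ)⟩
  set ρ := (L⁻¹ - c)⁻¹
  have hρ : 0 < ρ := inv_pos.2 (by linarith [inv_pos.2 hL])
  have hρGD : ∀ k, k ∈ e.J → L ≤ sizeWrt β (e.G k) → ρ ≤ gapDist β C e k := by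
    intro k hk hLk
    have hτk := EReal.coe_le_coe_iff.1 (hcτ.trans (thicknessA_le_coe hτ hk (hL.trans_le hLk)))
    have hSL : (sizeWrt β (e.G k))⁻¹ ≤ L⁻¹ := inv_anti₀ hL hLk
    exact inv_le_of_inv_le₀ (gapDist_pos_of_thicknessA_ne_bot hτ hk) (by linarith)
  choose! p hp using fun k (hk : k ∈ e.J) => (e.isGap k hk).1.nonempty
  refine finite_of_forall_notMem_affBox (fun j => (hβ j).1) (isCompact_closedBall 0 1)
    (fun k hk => (e.isGap k hk.1).subset_closedBall hsub (hp k hk.1)) (1 / (ρ / 2)) ?_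
  intro k hk l hl hkl z hpk hpl
  have := gapDist_le (e := e)
    ⟨half_pos hρ, z, ⟨p l, hpl, hp l hl.1⟩, p k, hpk, Or.inl (mem_biUnion ⟨hk.1, hkl⟩ (hp k hk.1))⟩
  linarith [hρGD l hl.1 hl.2]

theorem tendsto_diam_gap (hβ : ∀ j, β j ∈ Ioo (0 : ℝ) 1) (hsub : C ⊆ closedBall 0 1)
    (hτ : thicknessA β C e ≠ ⊥) {σ : ℕ → ℕ} (hσJ : ∀ i, σ i ∈ e.J)
    (hσ : Tendsto σ atTop atTop) : Tendsto (fun i => diam (e.G (σ i))) atTop (𝓝 0) := by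
  refine tendsto_order.2 ⟨fun a ha => Eventually.of_forall fun i => ha.trans_le diam_nonneg,
    fun ε hε => ?_⟩
  obtain ⟨L, hL, hbox⟩ := (nhdsGT_basis (0 : ℝ)).eventually_iff.1
    (eventually_forall_dist_le_of_mem_affBox hβ (half_pos hε))
  obtain ⟨K, hK⟩ := (finite_setOf_le_sizeWrt hβ hsub hτ hL).bddAbove
  filter_upwards [hσ.eventually_gt_atTop K] with i hi
  have hS : sizeWrt β (e.G (σ i)) < L := not_le.1 fun h => hi.not_ge (hK ⟨hσJ i, h⟩)
  obtain ⟨u, ⟨hu, z, hz⟩, huL⟩ := exists_lt_of_csInf_lt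
    (sizeSet_nonempty_of_gapDist_pos hβ hsub (gapDist_pos_of_thicknessA_ne_bot hτ (hσJ i))) hS
  exact (diam_le_of_forall_dist_le (half_pos hε).le fun x hx y hy =>
    hbox ⟨hu, huL⟩ z x (hz hx) y (hz hy)).trans_lt (half_lt_self hε)

theorem gapDist_le_sizeWrt {G : Set (Fin n → ℝ)} {t : ℕ}
    (hcover : frontier G ⊆ (⋃ j ∈ e.J ∩ Iic t, e.G j) ∪ unboundedGap C)
    (hL : Linked G (e.G t)) (hne : (sizeSet β G).Nonempty) :
    gapDist β C e t ≤ sizeWrt β G := by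
  refine le_csInf hne ?_
  rintro u ⟨hu, z, hz⟩
  obtain ⟨x, hxG, hxt⟩ := hL.1
  obtain ⟨y, hy, hyt⟩ := hL.2.1
  refine gapDist_le ⟨hu, z, ⟨x, hz hxG, hxt⟩, y,
    closure_minimal hz (isClosed_affBox _ _) (frontier_subset_closure hy), ?_⟩
  refine (hcover hy).imp_left fun hy' => ?_
  obtain ⟨j, ⟨hj, hjt⟩, hyj⟩ := mem_iUnion₂.1 hy'
  exact mem_biUnion ⟨hj, (mem_Iic.1 hjt).lt_of_ne fun h => hyt (h ▸ hyj)⟩ hyj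

end GapEnum

theorem EReal.ne_bot_of_add_pos {a b : EReal} (h : 0 < a + b) : a ≠ ⊥ ∧ b ≠ ⊥ :=
  ⟨by rintro rfl; simp at h, by rintro rfl; simp at h⟩

theorem exists_linked_succ (hβ : ∀ j, β j ∈ Ioo (0 : ℝ) 1) {C₁ C₂ : Set (Fin n → ℝ)}
    (hC₁ : IsClosed C₁) (hC₂ : IsClosed C₂) (hsub₁ : C₁ ⊆ closedBall 0 1)
    (hsub₂ : C₂ ⊆ closedBall 0 1) (hdisj : Disjoint C₁ C₂) (hBG : BGLinked C₁ C₂)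
    (e₁ : GapEnum β C₁) (e₂ : GapEnum β C₂)
    (hτ : 0 < thicknessA β C₁ e₁ + thicknessA β C₂ e₂) {s t : ℕ} (hs : s ∈ e₁.J)
    (ht : t ∈ e₂.J) (hL : Linked (e₁.G s) (e₂.G t)) :
    (∃ t' ∈ e₂.J, t < t' ∧ Linked (e₁.G s) (e₂.G t')) ∨
      ∃ s' ∈ e₁.J, s < s' ∧ Linked (e₁.G s') (e₂.G t) := by
  by_contra! h
  obtain ⟨h₂, h₁⟩ := h
  obtain ⟨hτ₁, hτ₂⟩ := EReal.ne_bot_of_add_pos hτ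
  have hpos₁ := gapDist_pos_of_thicknessA_ne_bot hτ₁ hs
  have hpos₂ := gapDist_pos_of_thicknessA_ne_bot hτ₂ ht
  have hGD₂ : gapDist β C₂ e₂ t ≤ sizeWrt β (e₁.G s) :=
    gapDist_le_sizeWrt
      (frontier_subset_of_forall_not_linked hC₁ hC₂ hdisj hBG e₂ (e₁.isGap s hs) h₂) hL
      (sizeSet_nonempty_of_gapDist_pos hβ hsub₁ hpos₁)
  have hGD₁ : gapDist β C₁ e₁ s ≤ sizeWrt β (e₂.G t) :=
    gapDist_le_sizeWrt
      (frontier_subset_of_forall_not_linked hC₂ hC₁ hdisj.symm hBG.symm e₁ (e₂.isGap t ht)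
        fun j hj hlt hL' => h₁ j hj hlt hL'.symm) hL.symm
      (sizeSet_nonempty_of_gapDist_pos hβ hsub₂ hpos₂)
  have hsum := add_le_add (thicknessA_le_coe hτ₁ hs (hpos₂.trans_le hGD₂))
    (thicknessA_le_coe hτ₂ ht (hpos₁.trans_le hGD₁))
  have hreal : (sizeWrt β (e₁.G s))⁻¹ - (gapDist β C₁ e₁ s)⁻¹ +
      ((sizeWrt β (e₂.G t))⁻¹ - (gapDist β C₂ e₂ t)⁻¹) ≤ 0 := by
    linarith [inv_anti₀ hpos₂ hGD₂, inv_anti₀ hpos₁ hGD₁]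
  exact hτ.not_ge (hsum.trans (by exact_mod_cast hreal))

theorem exists_seq_of_forall_exists_step {P : ℕ → ℕ → Prop} {a b : ℕ} (h₀ : P a b)
    (hstep : ∀ s t, P s t → (∃ t', t < t' ∧ P s t') ∨ ∃ s', s < s' ∧ P s' t) :
    ∃ s t : ℕ → ℕ, (∀ i, P (s i) (t i)) ∧
      (∀ i, (s (i + 1) = s i ∧ t i < t (i + 1)) ∨ (s i < s (i + 1) ∧ t (i + 1) = t i)) ∧
      (Tendsto s atTop atTop ∨ Tendsto t atTop atTop) := by
  let Q := {q : ℕ × ℕ // P q.1 q.2}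
  have hnext : ∀ q : Q, ∃ q' : Q,
      (q'.1.1 = q.1.1 ∧ q.1.2 < q'.1.2) ∨ (q.1.1 < q'.1.1 ∧ q'.1.2 = q.1.2) := by
    rintro ⟨⟨s, t⟩, hq⟩
    rcases hstep s t hq with ⟨t', ht', hP⟩ | ⟨s', hs', hP⟩
    · exact ⟨⟨(s, t'), hP⟩, Or.inl ⟨rfl, ht'⟩⟩
    · exact ⟨⟨(s', t), hP⟩, Or.inr ⟨hs', rfl⟩⟩
  choose next hnext using hnext
  let q : ℕ → Q := fun i => Nat.rec ⟨(a, b), h₀⟩ (fun _ => next) i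
  have hq : ∀ i, (q (i + 1)).1.1 = (q i).1.1 ∧ (q i).1.2 < (q (i + 1)).1.2 ∨
      (q i).1.1 < (q (i + 1)).1.1 ∧ (q (i + 1)).1.2 = (q i).1.2 := fun i => hnext (q i)
  refine ⟨fun i => (q i).1.1, fun i => (q i).1.2, fun i => (q i).2, hq, ?_⟩
  have hmono_s : Monotone fun i => (q i).1.1 :=
    monotone_nat_of_le_succ fun i => by rcases hq i with h | h <;> omega
  have hgrow : ∀ i, i ≤ (q i).1.1 + (q i).1.2 := by
    intro i
    induction i with
    | zero => exact Nat.zero_le _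
    | succ i ih => rcases hq i with h | h <;> omega
  by_cases hs : ∀ N, ∃ i, N ≤ (q i).1.1
  · exact Or.inl (tendsto_atTop_atTop_of_monotone hmono_s hs)
  obtain ⟨N, hN⟩ : ∃ N, ∀ i, (q i).1.1 < N := by simpa using hs
  exact Or.inr (tendsto_atTop_mono (fun i => by have := hgrow i; have := hN i; omega)
    (tendsto_sub_atTop_nat N))

theorem exists_sequence_of_linked_gaps_general (n : ℕ)
    (β : Fin n → ℝ) (hβ : ∀ j, β j ∈ Set.Ioo (0 : ℝ) 1)
    (C₁ C₂ : Set (Fin n → ℝ)) (hC₁ : IsCompact C₁) (hC₂ : IsCompact C₂)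
    (hsub₁ : C₁ ⊆ closedBall 0 1) (hsub₂ : C₂ ⊆ closedBall 0 1)
    (hBG : BGLinked C₁ C₂)
    (e₁ : GapEnum β C₁) (e₂ : GapEnum β C₂)
    (hτ : 0 < thicknessA β C₁ e₁ + thicknessA β C₂ e₂)
    (hdisj : C₁ ∩ C₂ = ∅)
    (hG₁ : ∃ G₁, IsBoundedGap C₁ G₁ ∧ ¬ frontier G₁ ⊆ unboundedGap C₂) :
    ∃ s t : ℕ → ℕ,
      (∀ i, s i ∈ e₁.J ∧ t i ∈ e₂.J ∧ Linked (e₁.G (s i)) (e₂.G (t i))) ∧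
      (∀ i, (s (i + 1) = s i ∧ t i < t (i + 1)) ∨ (s i < s (i + 1) ∧ t (i + 1) = t i)) ∧
      (Filter.Tendsto (fun i => Metric.diam (e₁.G (s i))) Filter.atTop (nhds 0) ∨
        Filter.Tendsto (fun i => Metric.diam (e₂.G (t i))) Filter.atTop (nhds 0)) := by
  have hdisj' : Disjoint C₁ C₂ := disjoint_iff_inter_eq_empty.2 hdisj
  obtain ⟨G, hG, hGE⟩ := hG₁
  obtain ⟨x, hx, hxE⟩ := not_subset.1 hGE
  obtain ⟨s₀, hs₀, rfl⟩ := e₁.surj G hG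
  obtain ⟨t₀, ht₀, -, hL₀⟩ :=
    exists_linked_of_mem_frontier hC₁.isClosed hC₂.isClosed hdisj' hBG e₂ hG hx hxE
  obtain ⟨s, t, hP, hst, hlim⟩ := exists_seq_of_forall_exists_step
      (P := fun s t => s ∈ e₁.J ∧ t ∈ e₂.J ∧ Linked (e₁.G s) (e₂.G t)) ⟨hs₀, ht₀, hL₀⟩
      fun s t ⟨hs, ht, hL⟩ => (exists_linked_succ hβ hC₁.isClosed hC₂.isClosed hsub₁ hsub₂
        hdisj' hBG e₁ e₂ hτ hs ht hL).imp (fun ⟨t', ht', hlt, hL'⟩ => ⟨t', hlt, hs, ht', hL'⟩)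
        fun ⟨s', hs', hlt, hL'⟩ => ⟨s', hlt, hs', ht, hL'⟩
  obtain ⟨hτ₁, hτ₂⟩ := EReal.ne_bot_of_add_pos hτ
  exact ⟨s, t, hP, hst, hlim.imp (tendsto_diam_gap hβ hsub₁ hτ₁ fun i => (hP i).1)
    (tendsto_diam_gap hβ hsub₂ hτ₂ fun i => (hP i).2.1)⟩

/-- existence of a sequence of pairs of linked bounded gaps for a
BG linked pair of disjoint sets with positive total affine thickness. -/
theorem exists_sequence_of_linked_gaps (n : ℕ)
    (β : Fin n → ℝ) (hβ : ∀ j, β j ∈ Set.Ioo (0 : ℝ) 1)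
    (C₁ C₂ : Set (Fin n → ℝ)) (hC₁ : IsCompact C₁) (hC₂ : IsCompact C₂)
    (hne₁ : C₁.Nonempty) (hne₂ : C₂.Nonempty)
    (hsub₁ : C₁ ⊆ closedBall 0 1) (hsub₂ : C₂ ⊆ closedBall 0 1)
    (hBG : BGLinked C₁ C₂)
    (e₁ : GapEnum β C₁) (e₂ : GapEnum β C₂)
    (hτ : 0 < thicknessA β C₁ e₁ + thicknessA β C₂ e₂)
    (hdisj : C₁ ∩ C₂ = ∅)
    (hG₁ : ∃ G₁, IsBoundedGap C₁ G₁ ∧ ¬ frontier G₁ ⊆ unboundedGap C₂)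
    (hG₂ : ∃ G₂, IsBoundedGap C₂ G₂ ∧ ¬ frontier G₂ ⊆ unboundedGap C₁) :
    ∃ s t : ℕ → ℕ,
      (∀ i, s i ∈ e₁.J ∧ t i ∈ e₂.J ∧ Linked (e₁.G (s i)) (e₂.G (t i))) ∧
      (∀ i, (s (i + 1) = s i ∧ t i < t (i + 1)) ∨ (s i < s (i + 1) ∧ t (i + 1) = t i)) ∧
      (Filter.Tendsto (fun i => Metric.diam (e₁.G (s i))) Filter.atTop (nhds 0) ∨
        Filter.Tendsto (fun i => Metric.diam (e₂.G (t i))) Filter.atTop (nhds 0)) :=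
  exists_sequence_of_linked_gaps_general n β hβ C₁ C₂ hC₁ hC₂ hsub₁ hsub₂ hBG e₁ e₂ hτ hdisj hG₁
end

section
/- Let A be a diagonal n×n matrix with diagonal entries β₁₁,…,βₙₙ ∈ (0,1), and let C₁, C₂ ⊆ B[0,1] be nonempty compact sets which are BG linked, such that there exist a bounded gap G¹ of C₁ with ∂G¹ ⊄ E² (the unbounded gap of C₂) and a bounded gap G² of C₂ with ∂G² ⊄ E¹ (the unbounded gap of C₁). If τ_A(C₁) + τ_A(C₂) > 0, then C₁ ∩ C₂ ≠ ∅. -/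
open Metric Set Topology Filter
open scoped ENNReal Classical

noncomputable section

variable {n : ℕ}

lemma affBox_isClosed (β : Fin n → ℝ) (s : ℝ) (z : Fin n → ℝ) : IsClosed (affBox β s z) := by
  have h : affBox β s z = ⋂ j, {x : Fin n → ℝ | |x j - z j| ≤ (β j) ^ s} := by
    ext x; simp [affBox, Set.mem_iInter]
  rw [h]
  exact isClosed_iInter fun j =>
    isClosed_le (((continuous_apply j).sub continuous_const).abs) continuous_const

lemma IsGap.isOpen' {C G : Set (Fin n → ℝ)} (hC : IsClosed C) (h : IsGap C G) : IsOpen G := by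
  obtain ⟨x, hx, rfl⟩ := h
  exact hC.isOpen_compl.connectedComponentIn

lemma IsGap.nonempty' {C G : Set (Fin n → ℝ)} (h : IsGap C G) : G.Nonempty := by
  obtain ⟨x, hx, rfl⟩ := h
  exact ⟨x, mem_connectedComponentIn hx⟩

lemma gap_eq_component {C G : Set (Fin n → ℝ)} (h : IsGap C G) {z : Fin n → ℝ} (hz : z ∈ G) :
    connectedComponentIn Cᶜ z = G := by
  obtain ⟨x, hx, rfl⟩ := h
  exact (connectedComponentIn_eq hz).symm

lemma gap_subset_compl {C G : Set (Fin n → ℝ)} (h : IsGap C G) : G ⊆ Cᶜ := by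
  obtain ⟨x, hx, rfl⟩ := h
  exact connectedComponentIn_subset _ _

lemma IsGap.frontier_subset_s6 {C G : Set (Fin n → ℝ)} (hC : IsClosed C) (h : IsGap C G) :
    frontier G ⊆ C := by
  intro y hy
  by_contra hyC
  have hyc : y ∈ Cᶜ := hyC
  have hUo : IsOpen (connectedComponentIn Cᶜ y) := hC.isOpen_compl.connectedComponentIn
  have hyU : y ∈ connectedComponentIn Cᶜ y := mem_connectedComponentIn hyc
  have hycl : y ∈ closure G := hy.1
  obtain ⟨w, hwU, hwG⟩ := mem_closure_iff.1 hycl _ hUo hyU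
  have h1 : connectedComponentIn Cᶜ y = connectedComponentIn Cᶜ w := connectedComponentIn_eq hwU
  have h2 : connectedComponentIn Cᶜ w = G := gap_eq_component h hwG
  have : y ∈ G := by rw [← h2, ← h1]; exact hyU
  rw [(h.isOpen' hC).frontier_eq] at hy
  exact hy.2 this

lemma unboundedGap_of_notMem_ball {C : Set (Fin n → ℝ)} (hC : C ⊆ closedBall 0 1)
    {z : Fin n → ℝ} (hz : z ∉ closedBall (0 : Fin n → ℝ) 1) : z ∈ unboundedGap C := by
  obtain ⟨j, hj⟩ : ∃ j, 1 < |z j| := by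
    by_contra hall
    push_neg at hall
    exact hz (by
      rw [mem_closedBall]
      rw [dist_pi_le_iff zero_le_one]
      intro b
      simpa [Real.dist_eq] using hall b)
  set f : ℝ → (Fin n → ℝ) := fun s => z + s • (Pi.single j (z j) : Fin n → ℝ) with hf
  have hfc : Continuous f := continuous_const.add (continuous_id.smul continuous_const)
  have hfj : ∀ s, f s j = (1 + s) * z j := by
    intro s; simp [hf, Pi.single_eq_same]; ring
  have hnorm : ∀ s, 0 ≤ s → 1 + s < |f s j| := by
    intro s hs
    rw [hfj, abs_mul]
    have h1 : (0:ℝ) < 1 + s := by linarith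
    calc 1 + s = (1 + s) * 1 := by ring
    _ < (1 + s) * |z j| := by exact mul_lt_mul_of_pos_left hj h1
    _ ≤ |1 + s| * |z j| := by
        apply mul_le_mul_of_nonneg_right (le_abs_self _) (abs_nonneg _)
  have hdist : ∀ s, 0 ≤ s → 1 + s < dist (f s) 0 := by
    intro s hs
    calc 1 + s < |f s j| := hnorm s hs
    _ = dist (f s j) ((0 : Fin n → ℝ) j) := by simp [Real.dist_eq]
    _ ≤ dist (f s) 0 := dist_le_pi_dist _ _ _
  have hRC : f '' Ici 0 ⊆ Cᶜ := by
    rintro w ⟨s, hs, rfl⟩ hwC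
    have hs' : (0:ℝ) ≤ s := hs
    have := hdist s hs'
    have h2 := hC hwC
    rw [mem_closedBall] at h2
    linarith
  have hzR : z ∈ f '' Ici 0 := ⟨0, mem_Ici.2 le_rfl, by simp [hf]⟩
  have hpre : IsPreconnected (f '' Ici 0) := isPreconnected_Ici.image f hfc.continuousOn
  have hsub : f '' Ici 0 ⊆ connectedComponentIn Cᶜ z :=
    hpre.subset_connectedComponentIn hzR hRC
  refine ⟨fun hzC => hRC hzR hzC, fun hbdd => ?_⟩
  obtain ⟨r, hr⟩ := hbdd.subset_closedBall 0
  have h1 : f (|r| + 1) ∈ closedBall (0 : Fin n → ℝ) r :=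
    hr (hsub ⟨|r| + 1, mem_Ici.2 (by positivity), rfl⟩)
  rw [mem_closedBall] at h1
  have h2 := hdist (|r| + 1) (by positivity)
  have : r ≤ |r| := le_abs_self r
  linarith

lemma IsBoundedGap.subset_ball {C G : Set (Fin n → ℝ)} (hC : C ⊆ closedBall 0 1)
    (h : IsBoundedGap C G) : G ⊆ closedBall 0 1 := by
  intro w hw
  by_contra hwb
  have h1 := (unboundedGap_of_notMem_ball hC hwb).2
  rw [gap_eq_component h.1 hw] at h1
  exact h1 h.2


-- helper: rpow/log facts
lemma BGaux.log_bound {b c t : ℝ} (hb0 : 0 < b) (hb1 : b < 1) (ht : 0 < t) (hc : 0 < c)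
    (h : c ≤ b ^ (1 / t)) : Real.log b / Real.log c ≤ t := by
  have hbt1 : b ^ (1 / t) < 1 := Real.rpow_lt_one hb0.le hb1 (by positivity)
  have hc1 : c < 1 := lt_of_le_of_lt h hbt1
  have hlb : Real.log b < 0 := Real.log_neg hb0 hb1
  have hlc : Real.log c < 0 := Real.log_neg hc hc1
  have h2 : Real.log c ≤ (1 / t) * Real.log b := by
    calc Real.log c ≤ Real.log (b ^ (1 / t)) := Real.log_le_log hc h
    _ = (1 / t) * Real.log b := Real.log_rpow hb0 _
  have h3 : t * Real.log c ≤ Real.log b := by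
    have h4 := mul_le_mul_of_nonneg_left h2 ht.le
    have h5 : t * ((1 / t) * Real.log b) = Real.log b := by field_simp
    linarith [h4, h5.le]
  exact (div_le_iff_of_neg hlc).2 h3

lemma BGaux.rpow_log_div {b c : ℝ} (hb0 : 0 < b) (hb1 : b < 1) (hc0 : 0 < c) (hc1 : c < 1) :
    b ^ (Real.log c / Real.log b) = c := by
  have hlb : Real.log b ≠ 0 := ne_of_lt (Real.log_neg hb0 hb1)
  rw [Real.rpow_def_of_pos hb0, mul_comm, div_mul_cancel₀ _ hlb, Real.exp_log hc0]

lemma BGaux.sizeWrt_pos {n : ℕ} (hn : 0 < n) {β : Fin n → ℝ}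
    (hβ : ∀ j, β j ∈ Set.Ioo (0 : ℝ) 1) {G : Set (Fin n → ℝ)}
    (hG : IsOpen G) (hGne : G.Nonempty)
    (hS : {t | 0 < t ∧ ∃ z, G ⊆ affBox β (1 / t) z}.Nonempty) : 0 < sizeWrt β G := by
  obtain ⟨x, hx⟩ := hGne
  obtain ⟨ρ, hρ, hball⟩ := Metric.isOpen_iff.1 hG x hx
  set ρ' : ℝ := min ρ 1 with hρ'def
  have hρ'0 : 0 < ρ' := lt_min hρ one_pos
  have hρ'1 : ρ' ≤ 1 := min_le_right _ _
  set j₀ : Fin n := ⟨0, hn⟩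
  set x' : Fin n → ℝ := x + (ρ' / 2) • (Pi.single j₀ 1 : Fin n → ℝ) with hx'def
  have hx'j : x' j₀ = x j₀ + ρ' / 2 := by simp [hx'def, Pi.single_eq_same]
  have hx'G : x' ∈ G := by
    apply hball
    rw [mem_ball]
    have h1 : dist x' x ≤ ρ' / 2 := by
      rw [dist_pi_le_iff (by positivity)]
      intro b
      by_cases hb : b = j₀
      · subst hb; rw [hx'j]; simp [Real.dist_eq, abs_of_nonneg hρ'0.le]
      · simp [hx'def, Pi.single_eq_of_ne hb, Real.dist_eq]; positivity
    calc dist x' x ≤ ρ' / 2 := h1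
    _ < ρ := by have := min_le_left ρ 1; simp only [← hρ'def] at this ⊢; linarith
  have hb0 : 0 < β j₀ := (hβ j₀).1
  have hb1 : β j₀ < 1 := (hβ j₀).2
  have hc0 : (0 : ℝ) < ρ' / 4 := by positivity
  have key : ∀ t ∈ {t | 0 < t ∧ ∃ z, G ⊆ affBox β (1 / t) z},
      Real.log (β j₀) / Real.log (ρ' / 4) ≤ t := by
    rintro t ⟨ht, z, hz⟩
    have h1 := hz hx j₀
    have h2 := hz hx'G j₀
    have h3 : ρ' / 4 ≤ β j₀ ^ (1 / t) := by
      have h4 : |x j₀ - x' j₀| = ρ' / 2 := by rw [hx'j]; rw [abs_of_nonpos] <;> linarith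
      have h5 : |x j₀ - x' j₀| ≤ |x j₀ - z j₀| + |x' j₀ - z j₀| := by
        have := abs_sub_abs_le_abs_sub (x j₀ - z j₀) (x' j₀ - z j₀)
        have h6 := abs_sub (x j₀ - z j₀) (x' j₀ - z j₀)
        calc |x j₀ - x' j₀| = |(x j₀ - z j₀) - (x' j₀ - z j₀)| := by ring_nf
        _ ≤ |x j₀ - z j₀| + |x' j₀ - z j₀| := abs_sub _ _
      rw [h4] at h5
      linarith
    exact BGaux.log_bound hb0 hb1 ht hc0 h3
  have hpos : 0 < Real.log (β j₀) / Real.log (ρ' / 4) := by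
    apply div_pos_of_neg_of_neg (Real.log_neg hb0 hb1) (Real.log_neg hc0 (by linarith))
  exact lt_of_lt_of_le hpos (le_csInf hS key)

lemma BGaux.sizeSet_nonempty {n : ℕ} (hn : 0 < n) {β : Fin n → ℝ}
    (hβ : ∀ j, β j ∈ Set.Ioo (0 : ℝ) 1) {C : Set (Fin n → ℝ)}
    (hsub : C ⊆ closedBall 0 1) (e : GapEnum β C)
    (hbot : thicknessA β C e ≠ ⊥) {l : ℕ} (hl : l ∈ e.J) :
    {t | 0 < t ∧ ∃ z, e.G l ⊆ affBox β (1 / t) z}.Nonempty := by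
  classical
  have hg := e.isGap l hl
  have hGne : (e.G l).Nonempty := hg.1.nonempty'
  have hKb : Bornology.IsBounded (closure (e.G l)) := hg.2.closure
  have hKc : IsCompact (closure (e.G l)) :=
    Metric.isCompact_of_isClosed_isBounded isClosed_closure hKb
  have hKne : (closure (e.G l)).Nonempty := hGne.closure
  have hKball : closure (e.G l) ⊆ closedBall 0 1 :=
    closure_minimal (IsBoundedGap.subset_ball hsub hg) Metric.isClosed_closedBall
  set K := closure (e.G l) with hK
  set M : Fin n → ℝ := fun j => sSup ((fun x => x j) '' K) with hM
  set m : Fin n → ℝ := fun j => sInf ((fun x => x j) '' K) with hm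
  have himgc : ∀ j, IsCompact ((fun x : Fin n → ℝ => x j) '' K) :=
    fun j => hKc.image (continuous_apply j)
  have himgne : ∀ j, ((fun x : Fin n → ℝ => x j) '' K).Nonempty := fun j => hKne.image _
  have hxle : ∀ j, ∀ x ∈ K, x j ≤ M j := fun j x hx =>
    le_csSup (himgc j).bddAbove ⟨x, hx, rfl⟩
  have hlex : ∀ j, ∀ x ∈ K, m j ≤ x j := fun j x hx =>
    csInf_le (himgc j).bddBelow ⟨x, hx, rfl⟩
  have habs : ∀ j, ∀ x ∈ K, |x j| ≤ 1 := by
    intro j x hx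
    have h1 := hKball hx
    rw [mem_closedBall] at h1
    calc |x j| = dist (x j) ((0 : Fin n → ℝ) j) := by simp [Real.dist_eq]
    _ ≤ dist x 0 := dist_le_pi_dist _ _ _
    _ ≤ 1 := h1
  have hM1 : ∀ j, M j ≤ 1 := by
    intro j
    apply csSup_le (himgne j)
    rintro y ⟨x, hx, rfl⟩
    exact (abs_le.1 (habs j x hx)).2
  have hm1 : ∀ j, -1 ≤ m j := by
    intro j
    apply le_csInf (himgne j)
    rintro y ⟨x, hx, rfl⟩
    exact (abs_le.1 (habs j x hx)).1
  have hfne : (Finset.univ : Finset (Fin n)).Nonempty := ⟨⟨0, hn⟩, Finset.mem_univ _⟩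
  by_cases hA : ∀ j, M j - m j < 2
  · set c : ℝ := max (1/2) (Finset.univ.sup' hfne (fun j => (M j - m j)/2)) with hc
    have hc0 : (0:ℝ) < c := lt_of_lt_of_le (by norm_num) (le_max_left _ _)
    have hc1 : c < 1 := by
      apply max_lt (by norm_num)
      rw [Finset.sup'_lt_iff]
      intro j _
      linarith [hA j]
    have hcj : ∀ j, (M j - m j)/2 ≤ c := fun j =>
      le_trans (Finset.le_sup' (fun j => (M j - m j)/2) (Finset.mem_univ j)) (le_max_right _ _)
    set bmin : ℝ := Finset.univ.inf' hfne β with hbmin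
    have hbmin0 : 0 < bmin := by
      rw [hbmin, Finset.lt_inf'_iff]
      exact fun j _ => (hβ j).1
    have hbmin1 : bmin < 1 :=
      lt_of_le_of_lt (Finset.inf'_le _ (Finset.mem_univ ⟨0, hn⟩)) (hβ _).2
    set t : ℝ := Real.log bmin / Real.log c with htdef
    have ht0 : 0 < t :=
      div_pos_of_neg_of_neg (Real.log_neg hbmin0 hbmin1) (Real.log_neg hc0 hc1)
    have hbt : bmin ^ (1/t) = c := by
      rw [htdef, one_div_div]
      exact BGaux.rpow_log_div hbmin0 hbmin1 hc0 hc1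
    refine ⟨t, ht0, fun j => (M j + m j)/2, ?_⟩
    intro x hx j
    have hx' : x ∈ K := subset_closure hx
    have h1 : |x j - (M j + m j)/2| ≤ (M j - m j)/2 := by
      rw [abs_le]
      constructor
      · linarith [hlex j x hx']
      · linarith [hxle j x hx']
    calc |x j - (M j + m j)/2| ≤ c := le_trans h1 (hcj j)
    _ = bmin ^ (1/t) := hbt.symm
    _ ≤ β j ^ (1/t) :=
        Real.rpow_le_rpow hbmin0.le (Finset.inf'_le _ (Finset.mem_univ j))
          (le_of_lt (one_div_pos.2 ht0))
  · push_neg at hA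
    obtain ⟨j, hj⟩ := hA
    exfalso
    have hMj : M j = 1 := le_antisymm (hM1 j) (by linarith [hm1 j])
    obtain ⟨xp, hxpK, hxpj⟩ := (himgc j).sSup_mem (himgne j)
    have hxj1 : xp j = 1 := by rw [← hMj]; exact hxpj
    have hGD : gapDist β C e l = 0 := by
      have hset : {t | 0 < t ∧ ∃ z, (affBox β (1/t) z ∩ e.G l).Nonempty ∧
          (affBox β (1/t) z ∩ ((⋃ i ∈ e.J ∩ Iio l, e.G i) ∪ unboundedGap C)).Nonempty}
          = Ioi 0 := by
        apply Subset.antisymm (fun t ht => ht.1)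
        intro t ht
        have ht' : (0:ℝ) < t := ht
        set rmin : ℝ := Finset.univ.inf' hfne (fun i => β i ^ (1/t)) with hrmin
        have hrmin0 : 0 < rmin := by
          rw [hrmin, Finset.lt_inf'_iff]
          intro i _
          exact Real.rpow_pos_of_pos (hβ i).1 _
        have hrle : ∀ i, rmin ≤ β i ^ (1/t) :=
          fun i => Finset.inf'_le _ (Finset.mem_univ i)
        refine ⟨ht', xp, ?_, ?_⟩
        · obtain ⟨w, hw1, hw2⟩ :=
            mem_closure_iff.1 hxpK (ball xp rmin) isOpen_ball (mem_ball_self hrmin0)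
          refine ⟨w, ?_, hw2⟩
          intro i
          have h1 : dist (w i) (xp i) ≤ dist w xp := dist_le_pi_dist _ _ _
          rw [Real.dist_eq] at h1
          rw [mem_ball] at hw1
          calc |w i - xp i| ≤ dist w xp := h1
          _ ≤ rmin := hw1.le
          _ ≤ β i ^ (1/t) := hrle i
        · set y : Fin n → ℝ := xp + (β j ^ (1/t)) • (Pi.single j 1 : Fin n → ℝ) with hy
          have hyj : y j = 1 + β j ^ (1/t) := by
            simp [hy, Pi.single_eq_same, hxj1]
          have hybox : y ∈ affBox β (1/t) xp := by
            intro i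
            by_cases hij : i = j
            · subst hij
              rw [hyj, hxj1]
              have hb : (0:ℝ) ≤ β i ^ (1/t) := (Real.rpow_pos_of_pos (hβ i).1 _).le
              rw [show (1:ℝ) + β i ^ (1/t) - 1 = β i ^ (1/t) by ring, abs_of_nonneg hb]
            · simp only [hy, Pi.add_apply, Pi.smul_apply, Pi.single_eq_of_ne hij,
                smul_eq_mul, mul_zero, add_zero, sub_self, abs_zero]
              exact (Real.rpow_pos_of_pos (hβ i).1 _).le
          have hynb : y ∉ closedBall (0 : Fin n → ℝ) 1 := by
            intro hmem
            rw [mem_closedBall] at hmem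
            have h1 : dist (y j) ((0 : Fin n → ℝ) j) ≤ dist y 0 := dist_le_pi_dist _ _ _
            rw [Real.dist_eq] at h1
            simp only [Pi.zero_apply, sub_zero] at h1
            have h2 : 1 + β j ^ (1/t) ≤ |y j| := by rw [hyj]; exact le_abs_self _
            have h3 := Real.rpow_pos_of_pos (hβ j).1 (1/t)
            linarith
          exact ⟨y, hybox, Or.inr (unboundedGap_of_notMem_ball hsub hynb)⟩
      rw [gapDist, hset, csInf_Ioi]
    apply hbot
    have hJne : e.J ≠ ∅ := fun h => (h ▸ hl : l ∈ (∅ : Set ℕ))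
    simp only [thicknessA, if_neg hJne, if_pos (⟨l, hl, hGD⟩ : ∃ k ∈ e.J, gapDist β C e k = 0)]

lemma BGaux.gapDist_pos {n : ℕ} {β : Fin n → ℝ} {C : Set (Fin n → ℝ)}
    (e : GapEnum β C) (hbot : thicknessA β C e ≠ ⊥) {l : ℕ} (hl : l ∈ e.J) :
    0 < gapDist β C e l := by
  have hnonneg : 0 ≤ gapDist β C e l := Real.sInf_nonneg (fun t ht => ht.1.le)
  rcases eq_or_lt_of_le hnonneg with h0 | h
  · exfalso
    apply hbot
    have hJne : e.J ≠ ∅ := fun h => (h ▸ hl : l ∈ (∅ : Set ℕ))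
    simp only [thicknessA, if_neg hJne,
      if_pos (⟨l, hl, h0.symm⟩ : ∃ k ∈ e.J, gapDist β C e k = 0)]
  · exact h

lemma BGaux.not_exists_gapDist_zero {n : ℕ} {β : Fin n → ℝ} {C : Set (Fin n → ℝ)}
    (e : GapEnum β C) (hbot : thicknessA β C e ≠ ⊥) :
    ¬ ∃ k ∈ e.J, gapDist β C e k = 0 := by
  intro hex
  apply hbot
  have hJne : e.J ≠ ∅ := by
    obtain ⟨k, hk, _⟩ := hex
    exact fun h => (h ▸ hk : k ∈ (∅ : Set ℕ))
  simp only [thicknessA, if_neg hJne, if_pos hex]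

lemma BGaux.thickness_le {n : ℕ} {β : Fin n → ℝ} {C : Set (Fin n → ℝ)}
    (e : GapEnum β C) (hbot : thicknessA β C e ≠ ⊥) {k : ℕ} (hk : k ∈ e.J) :
    thicknessA β C e ≤ invE (sizeWrt β (e.G k)) - invE (gapDist β C e k) := by
  have hJne : e.J ≠ ∅ := fun h => (h ▸ hk : k ∈ (∅ : Set ℕ))
  have hnot := BGaux.not_exists_gapDist_zero e hbot
  have heq : thicknessA β C e
      = ⨅ k ∈ e.J, (invE (sizeWrt β (e.G k)) - invE (gapDist β C e k)) := by
    simp only [thicknessA, if_neg hJne, if_neg hnot]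
  rw [heq]
  exact iInf₂_le k hk

lemma BGaux.linked_symm {n : ℕ} {U V : Set (Fin n → ℝ)} (h : Linked U V) : Linked V U :=
  ⟨by rw [Set.inter_comm]; exact h.1, h.2.2, h.2.1⟩

lemma BGaux.bgLinked_symm {n : ℕ} {C D : Set (Fin n → ℝ)} (h : BGLinked C D) :
    BGLinked D C := by
  intro G₂ G₁ h2 h1
  rcases h G₁ G₂ h1 h2 with hL | hE
  · exact Or.inl (BGaux.linked_symm hL)
  · exact Or.inr (by rw [Set.inter_comm]; exact hE)

lemma BGaux.halfStep {n : ℕ} {β : Fin n → ℝ}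
    {C D : Set (Fin n → ℝ)} (hCc : IsCompact C) (hDc : IsCompact D)
    (hdisj : ∀ x, x ∈ C → x ∉ D)
    (hBG : BGLinked C D) (eC : GapEnum β C) (eD : GapEnum β D)
    {k l : ℕ} (hk : k ∈ eC.J) (hl : l ∈ eD.J)
    (hne : (eC.G k ∩ eD.G l).Nonempty)
    (hS : {t | 0 < t ∧ ∃ z, eC.G k ⊆ affBox β (1 / t) z}.Nonempty) :
    ∃ l' ∈ eD.J, (eC.G k ∩ eD.G l').Nonempty ∧
      gapDist β D eD l' ≤ sizeWrt β (eC.G k) := by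
  classical
  have hGk := eC.isGap k hk
  have hHl := eD.isGap l hl
  have hlink : Linked (eC.G k) (eD.G l) :=
    (hBG _ _ hGk hHl).resolve_right (fun h => hne.ne_empty h)
  obtain ⟨y, hyf, hyH⟩ := hlink.2.1
  have hyC : y ∈ C := hGk.1.frontier_subset_s6 hCc.isClosed hyf
  have hyD : y ∉ D := hdisj y hyC
  have hycl : y ∈ closure (eC.G k) := hyf.1
  obtain ⟨q0, hq0G, hq0H⟩ := id hne
  -- generic: for a chosen l' and a point y' in the earlier-or-unbounded part lying in closure (G k),
  -- conclude the gapDist bound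
  have main : ∀ l' ∈ eD.J, (∀ t ∈ {t | 0 < t ∧ ∃ z, eC.G k ⊆ affBox β (1 / t) z},
        ∃ z, (affBox β (1/t) z ∩ eD.G l').Nonempty ∧
        (affBox β (1/t) z ∩ ((⋃ i ∈ eD.J ∩ Iio l', eD.G i) ∪ unboundedGap D)).Nonempty) →
      gapDist β D eD l' ≤ sizeWrt β (eC.G k) := by
    intro l' _ hprop
    apply le_csInf hS
    rintro t ht
    apply csInf_le ⟨0, fun r hr => hr.1.le⟩
    exact ⟨ht.1, hprop t ht⟩
  by_cases hb : Bornology.IsBounded (connectedComponentIn Dᶜ y)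
  · have hgap : IsBoundedGap D (connectedComponentIn Dᶜ y) := ⟨⟨y, hyD, rfl⟩, hb⟩
    obtain ⟨l'', hl''J, hGl''⟩ := eD.surj _ hgap
    have hyH'' : y ∈ eD.G l'' := by
      rw [hGl'']; exact mem_connectedComponentIn hyD
    have hll : l'' ≠ l := fun h => hyH (h ▸ hyH'')
    have hopen'' : IsOpen (eD.G l'') := (eD.isGap l'' hl''J).1.isOpen' hDc.isClosed
    rcases lt_or_gt_of_ne hll with hlt | hgt
    · refine ⟨l, hl, hne, main l hl ?_⟩
      rintro t ⟨ht, z, hz⟩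
      have hcl : closure (eC.G k) ⊆ affBox β (1/t) z :=
        closure_minimal hz (affBox_isClosed β _ z)
      exact ⟨z, ⟨q0, hcl (subset_closure hq0G), hq0H⟩,
        ⟨y, hcl hycl, Or.inl (Set.mem_biUnion ⟨hl''J, hlt⟩ hyH'')⟩⟩
    · obtain ⟨w, hwH'', hwG⟩ := mem_closure_iff.1 hycl _ hopen'' hyH''
      refine ⟨l'', hl''J, ⟨w, hwG, hwH''⟩, main l'' hl''J ?_⟩
      rintro t ⟨ht, z, hz⟩
      have hcl : closure (eC.G k) ⊆ affBox β (1/t) z :=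
        closure_minimal hz (affBox_isClosed β _ z)
      exact ⟨z, ⟨y, hcl hycl, hyH''⟩,
        ⟨q0, hcl (subset_closure hq0G), Or.inl (Set.mem_biUnion ⟨hl, hgt⟩ hq0H)⟩⟩
  · have hyE : y ∈ unboundedGap D := ⟨hyD, hb⟩
    refine ⟨l, hl, hne, main l hl ?_⟩
    rintro t ⟨ht, z, hz⟩
    have hcl : closure (eC.G k) ⊆ affBox β (1/t) z :=
      closure_minimal hz (affBox_isClosed β _ z)
    exact ⟨z, ⟨q0, hcl (subset_closure hq0G), hq0H⟩, ⟨y, hcl hycl, Or.inr hyE⟩⟩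

lemma BGaux.frontier_gap_nonempty {n : ℕ} (hn : 0 < n) {C G : Set (Fin n → ℝ)}
    (h : IsBoundedGap C G) : (frontier G).Nonempty := by
  rw [Set.nonempty_iff_ne_empty]
  intro hfr
  have hclopen : IsClopen G := isClopen_iff_frontier_eq_empty.2 hfr
  rcases isClopen_iff.mp hclopen with h0 | huniv
  · exact (h.1.nonempty').ne_empty h0
  · obtain ⟨r, hr⟩ := h.2.subset_closedBall 0
    set w : Fin n → ℝ := fun _ => |r| + 1 with hw
    have h1 : w ∈ closedBall (0 : Fin n → ℝ) r := by
      apply hr; rw [huniv]; trivial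
    rw [mem_closedBall] at h1
    have h2 : dist (w ⟨0, hn⟩) ((0 : Fin n → ℝ) ⟨0, hn⟩) ≤ dist w 0 :=
      dist_le_pi_dist w (0 : Fin n → ℝ) ⟨0, hn⟩
    simp only [hw, Pi.zero_apply, Real.dist_eq, sub_zero] at h2
    have h3 : r ≤ |r| := le_abs_self r
    have h4 : |r| + 1 ≤ abs (|r| + 1) := le_abs_self _
    linarith

lemma BGaux.infDist_le_gap {n : ℕ} (hn : 0 < n) {β : Fin n → ℝ}
    {C G : Set (Fin n → ℝ)} (hCc : IsCompact C)
    (h : IsBoundedGap C G) {q : Fin n → ℝ} (hq : q ∈ G) {t : ℝ} {z : Fin n → ℝ}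
    (hz : G ⊆ affBox β (1 / t) z) {b : ℝ} (hb0 : 0 ≤ b) (hb : ∀ j, β j ^ (1 / t) ≤ b) :
    infDist q C ≤ 2 * b := by
  obtain ⟨p, hp⟩ := BGaux.frontier_gap_nonempty hn h
  have hpC : p ∈ C := h.1.frontier_subset_s6 hCc.isClosed hp
  have hdiam : Metric.diam G ≤ 2 * b := by
    apply Metric.diam_le_of_forall_dist_le (by linarith)
    intro x hx y hy
    rw [dist_pi_le_iff (by linarith)]
    intro j
    have h1 := hz hx j
    have h2 := hz hy j
    rw [Real.dist_eq]
    have h3 : |x j - y j| ≤ |x j - z j| + |z j - y j| := abs_sub_le _ _ _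
    have h4 : |z j - y j| = |y j - z j| := abs_sub_comm _ _
    have h5 := hb j
    linarith
  calc infDist q C ≤ dist q p := infDist_le_dist_of_mem hpC
  _ ≤ Metric.diam (closure G) :=
      Metric.dist_le_diam_of_mem h.2.closure (subset_closure hq) hp.1
  _ = Metric.diam G := Metric.diam_closure _
  _ ≤ 2 * b := hdiam

end
/-- BG linked affine gap lemma. -/
theorem bg_linked_affine_gap_lemma (n : ℕ)
    (β : Fin n → ℝ) (hβ : ∀ j, β j ∈ Set.Ioo (0 : ℝ) 1)
    (C₁ C₂ : Set (Fin n → ℝ)) (hC₁ : IsCompact C₁) (hC₂ : IsCompact C₂)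
    (hne₁ : C₁.Nonempty) (hne₂ : C₂.Nonempty)
    (hsub₁ : C₁ ⊆ closedBall 0 1) (hsub₂ : C₂ ⊆ closedBall 0 1)
    (hBG : BGLinked C₁ C₂)
    (hG₁ : ∃ G₁, IsBoundedGap C₁ G₁ ∧ ¬ frontier G₁ ⊆ unboundedGap C₂)
    (hG₂ : ∃ G₂, IsBoundedGap C₂ G₂ ∧ ¬ frontier G₂ ⊆ unboundedGap C₁)
    (e₁ : GapEnum β C₁) (e₂ : GapEnum β C₂)
    (hτ : 0 < thicknessA β C₁ e₁ + thicknessA β C₂ e₂) :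
    (C₁ ∩ C₂).Nonempty := by
  classical
  rcases Nat.eq_zero_or_pos n with hn0 | hn
  · subst hn0
    obtain ⟨a, ha⟩ := hne₁
    obtain ⟨b, hb⟩ := hne₂
    have hab : a = b := funext fun j => j.elim0
    exact ⟨a, ha, hab ▸ hb⟩
  by_contra hcon
  have hdisj12 : ∀ x, x ∈ C₁ → x ∉ C₂ := fun x h1 h2 => hcon ⟨x, h1, h2⟩
  have hdisj21 : ∀ x, x ∈ C₂ → x ∉ C₁ := fun x h2 h1 => hcon ⟨x, h1, h2⟩
  have hbot₁ : thicknessA β C₁ e₁ ≠ ⊥ := by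
    intro h
    rw [h, EReal.bot_add] at hτ
    exact (not_lt.2 bot_le) hτ
  have hbot₂ : thicknessA β C₂ e₂ ≠ ⊥ := by
    intro h
    rw [h, EReal.add_bot] at hτ
    exact (not_lt.2 bot_le) hτ
  -- positivity of sizes and gap distances
  have hpos1 : ∀ k ∈ e₁.J, 0 < sizeWrt β (e₁.G k) := fun k hk =>
    BGaux.sizeWrt_pos hn hβ ((e₁.isGap k hk).1.isOpen' hC₁.isClosed)
      (e₁.isGap k hk).1.nonempty' (BGaux.sizeSet_nonempty hn hβ hsub₁ e₁ hbot₁ hk)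
  have hpos2 : ∀ l ∈ e₂.J, 0 < sizeWrt β (e₂.G l) := fun l hl =>
    BGaux.sizeWrt_pos hn hβ ((e₂.isGap l hl).1.isOpen' hC₂.isClosed)
      (e₂.isGap l hl).1.nonempty' (BGaux.sizeSet_nonempty hn hβ hsub₂ e₂ hbot₂ hl)
  have hd1 : ∀ k ∈ e₁.J, 0 < gapDist β C₁ e₁ k := fun k hk => BGaux.gapDist_pos e₁ hbot₁ hk
  have hd2 : ∀ l ∈ e₂.J, 0 < gapDist β C₂ e₂ l := fun l hl => BGaux.gapDist_pos e₂ hbot₂ hl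
  -- a uniform positive lower bound for the thickness sum
  obtain ⟨ε₀, hε₀pos, hε₀le⟩ : ∃ ε : ℝ, 0 < ε ∧
      (ε : EReal) ≤ thicknessA β C₁ e₁ + thicknessA β C₂ e₂ := by
    by_cases hT : thicknessA β C₁ e₁ + thicknessA β C₂ e₂ = ⊤
    · exact ⟨1, one_pos, by rw [hT]; exact le_top⟩
    · have hB : thicknessA β C₁ e₁ + thicknessA β C₂ e₂ ≠ ⊥ := ne_bot_of_gt hτ
      refine ⟨(thicknessA β C₁ e₁ + thicknessA β C₂ e₂).toReal, ?_, ?_⟩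
      · have h1 := EReal.coe_toReal hT hB
        rw [← h1] at hτ
        exact EReal.coe_pos.1 hτ
      · rw [EReal.coe_toReal hT hB]
  -- the key pairwise inequality
  have hpair : ∀ k ∈ e₁.J, ∀ l ∈ e₂.J,
      ε₀ + (gapDist β C₁ e₁ k)⁻¹ + (gapDist β C₂ e₂ l)⁻¹ ≤
        (sizeWrt β (e₁.G k))⁻¹ + (sizeWrt β (e₂.G l))⁻¹ := by
    intro k hk l hl
    have h1 : thicknessA β C₁ e₁ ≤
        (((sizeWrt β (e₁.G k))⁻¹ - (gapDist β C₁ e₁ k)⁻¹ : ℝ) : EReal) := by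
      have h := BGaux.thickness_le e₁ hbot₁ hk
      rwa [invE, if_neg (ne_of_gt (hpos1 k hk)), invE, if_neg (ne_of_gt (hd1 k hk)),
        ← EReal.coe_sub] at h
    have h2 : thicknessA β C₂ e₂ ≤
        (((sizeWrt β (e₂.G l))⁻¹ - (gapDist β C₂ e₂ l)⁻¹ : ℝ) : EReal) := by
      have h := BGaux.thickness_le e₂ hbot₂ hl
      rwa [invE, if_neg (ne_of_gt (hpos2 l hl)), invE, if_neg (ne_of_gt (hd2 l hl)),
        ← EReal.coe_sub] at h
    have h3 : (ε₀ : EReal) ≤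
        ((((sizeWrt β (e₁.G k))⁻¹ - (gapDist β C₁ e₁ k)⁻¹) +
          ((sizeWrt β (e₂.G l))⁻¹ - (gapDist β C₂ e₂ l)⁻¹) : ℝ) : EReal) := by
      rw [EReal.coe_add]
      exact le_trans hε₀le (add_le_add h1 h2)
    have h4 := EReal.coe_le_coe_iff.1 h3
    linarith
  -- the invariant
  set Pair : ℕ → ℕ → Prop := fun k l => k ∈ e₁.J ∧ l ∈ e₂.J ∧
    (e₁.G k ∩ e₂.G l).Nonempty ∧ gapDist β C₂ e₂ l ≤ sizeWrt β (e₁.G k) with hPair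
  -- the iteration step
  have hstep : ∀ k l, Pair k l → ∃ k' l', Pair k' l' ∧
      (sizeWrt β (e₁.G k))⁻¹ + ε₀ ≤ (sizeWrt β (e₁.G k'))⁻¹ ∧
      (sizeWrt β (e₂.G l))⁻¹ + ε₀ ≤ (sizeWrt β (e₂.G l'))⁻¹ := by
    rintro k l ⟨hk, hl, hne, hdl⟩
    obtain ⟨k', hk', hne', hd1k'⟩ := BGaux.halfStep hC₂ hC₁ hdisj21
      (BGaux.bgLinked_symm hBG) e₂ e₁ hl hk (by rwa [Set.inter_comm])
      (BGaux.sizeSet_nonempty hn hβ hsub₂ e₂ hbot₂ hl)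
    obtain ⟨l', hl', hne'', hd2l'⟩ := BGaux.halfStep hC₁ hC₂ hdisj12 hBG e₁ e₂ hk' hl
      (by rwa [Set.inter_comm] at hne')
      (BGaux.sizeSet_nonempty hn hβ hsub₁ e₁ hbot₁ hk')
    have i1 : (sizeWrt β (e₂.G l))⁻¹ ≤ (gapDist β C₁ e₁ k')⁻¹ :=
      inv_anti₀ (hd1 k' hk') hd1k'
    have i2 : (sizeWrt β (e₁.G k))⁻¹ ≤ (gapDist β C₂ e₂ l)⁻¹ :=
      inv_anti₀ (hd2 l hl) hdl
    have i3 : (sizeWrt β (e₁.G k'))⁻¹ ≤ (gapDist β C₂ e₂ l')⁻¹ :=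
      inv_anti₀ (hd2 l' hl') hd2l'
    have hp := hpair k' hk' l hl
    have hp' := hpair k' hk' l' hl'
    exact ⟨k', l', ⟨hk', hl', hne'', hd2l'⟩, by linarith, by linarith⟩
  -- the initial pair
  obtain ⟨Gb, hGb, hfr⟩ := hG₁
  obtain ⟨x, hxf, hxE⟩ := Set.not_subset.1 hfr
  have hxC : x ∈ C₁ := hGb.1.frontier_subset_s6 hC₁.isClosed hxf
  have hxD : x ∉ C₂ := hdisj12 x hxC
  have hbdd : Bornology.IsBounded (connectedComponentIn C₂ᶜ x) := by
    by_contra hb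
    exact hxE ⟨hxD, hb⟩
  have hgap2 : IsBoundedGap C₂ (connectedComponentIn C₂ᶜ x) := ⟨⟨x, hxD, rfl⟩, hbdd⟩
  obtain ⟨l₀, hl₀, hHl₀⟩ := e₂.surj _ hgap2
  obtain ⟨k₀, hk₀, hGk₀⟩ := e₁.surj Gb hGb
  have hxH : x ∈ e₂.G l₀ := by rw [hHl₀]; exact mem_connectedComponentIn hxD
  have hopen : IsOpen (e₂.G l₀) := (e₂.isGap _ hl₀).1.isOpen' hC₂.isClosed
  have hxcl : x ∈ closure (e₁.G k₀) := by rw [hGk₀]; exact hxf.1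
  obtain ⟨w, hwH, hwG⟩ := mem_closure_iff.1 hxcl _ hopen hxH
  obtain ⟨l₁, hl₁, hne1, hdl1⟩ := BGaux.halfStep hC₁ hC₂ hdisj12 hBG e₁ e₂ hk₀ hl₀
    ⟨w, hwG, hwH⟩ (BGaux.sizeSet_nonempty hn hβ hsub₁ e₁ hbot₁ hk₀)
  have hP0 : Pair k₀ l₁ := ⟨hk₀, hl₁, hne1, hdl1⟩
  -- iterate
  have hrec : ∀ p : {p : ℕ × ℕ // Pair p.1 p.2}, ∃ q : {p : ℕ × ℕ // Pair p.1 p.2},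
      (sizeWrt β (e₁.G p.1.1))⁻¹ + ε₀ ≤ (sizeWrt β (e₁.G q.1.1))⁻¹ ∧
      (sizeWrt β (e₂.G p.1.2))⁻¹ + ε₀ ≤ (sizeWrt β (e₂.G q.1.2))⁻¹ := by
    rintro ⟨⟨k, l⟩, hP⟩
    obtain ⟨k', l', hP', h1, h2⟩ := hstep k l hP
    exact ⟨⟨(k', l'), hP'⟩, h1, h2⟩
  choose F hF1 hF2 using hrec
  set u : ℕ → {p : ℕ × ℕ // Pair p.1 p.2} := fun m => F^[m] ⟨(k₀, l₁), hP0⟩ with hu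
  have husucc : ∀ m, u (m + 1) = F (u m) := fun m => Function.iterate_succ_apply' F m _
  have hgrow1 : ∀ m : ℕ, (sizeWrt β (e₁.G (u 0).1.1))⁻¹ + m * ε₀ ≤
      (sizeWrt β (e₁.G (u m).1.1))⁻¹ := by
    intro m
    induction m with
    | zero => simp
    | succ m ih =>
      rw [husucc m]
      have h := hF1 (u m)
      push_cast
      linarith
  have hgrow2 : ∀ m : ℕ, (sizeWrt β (e₂.G (u 0).1.2))⁻¹ + m * ε₀ ≤
      (sizeWrt β (e₂.G (u m).1.2))⁻¹ := by
    intro m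
    induction m with
    | zero => simp
    | succ m ih =>
      rw [husucc m]
      have h := hF2 (u m)
      push_cast
      linarith
  -- the minimum of the distance-sum function on the unit ball
  have hφc : Continuous (fun x : Fin n → ℝ => infDist x C₁ + infDist x C₂) :=
    (continuous_infDist_pt C₁).add (continuous_infDist_pt C₂)
  have hKc : IsCompact (closedBall (0 : Fin n → ℝ) 1) := isCompact_closedBall _ _
  have hKne : (closedBall (0 : Fin n → ℝ) 1).Nonempty := ⟨0, mem_closedBall_self zero_le_one⟩
  obtain ⟨x₀, hx₀K, hx₀min⟩ := hKc.exists_isMinOn hKne hφc.continuousOn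
  set δ : ℝ := infDist x₀ C₁ + infDist x₀ C₂ with hδ
  have hδpos : 0 < δ := by
    rcases lt_or_eq_of_le (add_nonneg infDist_nonneg infDist_nonneg : (0:ℝ) ≤ δ) with h | h
    · exact h
    · exfalso
      have h1 : infDist x₀ C₁ = 0 := by
        have i1 : (0:ℝ) ≤ infDist x₀ C₁ := infDist_nonneg
        have i2 : (0:ℝ) ≤ infDist x₀ C₂ := infDist_nonneg
        linarith
      have h2 : infDist x₀ C₂ = 0 := by
        have i1 : (0:ℝ) ≤ infDist x₀ C₁ := infDist_nonneg
        have i2 : (0:ℝ) ≤ infDist x₀ C₂ := infDist_nonneg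
        linarith
      exact hcon ⟨x₀, (hC₁.isClosed.mem_iff_infDist_zero hne₁).2 h1,
        (hC₂.isClosed.mem_iff_infDist_zero hne₂).2 h2⟩
  -- the maximal contraction ratio
  have hfne : (Finset.univ : Finset (Fin n)).Nonempty := ⟨⟨0, hn⟩, Finset.mem_univ _⟩
  set bmax : ℝ := Finset.univ.sup' hfne β with hbmax
  have hbmax0 : 0 < bmax :=
    lt_of_lt_of_le (hβ ⟨0, hn⟩).1 (Finset.le_sup' β (Finset.mem_univ _))
  have hbmax1 : bmax < 1 := by
    rw [hbmax, Finset.sup'_lt_iff]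
    exact fun j _ => (hβ j).2
  obtain ⟨N, hN⟩ := exists_pow_lt_of_lt_one (show (0:ℝ) < δ / 4 by linarith) hbmax1
  have hN₁ : bmax ^ (N + 1) < δ / 4 :=
    lt_of_le_of_lt (pow_le_pow_of_le_one hbmax0.le hbmax1.le (Nat.le_succ N)) hN
  have hN₁pos : (0:ℝ) < (N + 1 : ℕ) := by positivity
  obtain ⟨mm, hmm⟩ := exists_nat_gt (((N + 1 : ℕ) : ℝ) / ε₀)
  have hm1 : ((N + 1 : ℕ) : ℝ) < mm * ε₀ := by
    rw [div_lt_iff₀ hε₀pos] at hmm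
    linarith
  obtain ⟨hkJ, hlJ, hnem, -⟩ := (u mm).2
  obtain ⟨q, hqG, hqH⟩ := hnem
  -- bound for the C₁ side
  have hsmall : ∀ (C : Set (Fin n → ℝ)) (e : GapEnum β C) (hCc : IsCompact C)
      (hsub : C ⊆ closedBall 0 1) (hbot : thicknessA β C e ≠ ⊥)
      (j : ℕ) (hj : j ∈ e.J) (hq : q ∈ e.G j)
      (hsz : ((N + 1 : ℕ) : ℝ) < (sizeWrt β (e.G j))⁻¹),
      infDist q C ≤ 2 * bmax ^ (N + 1) := by
    intro C e hCc hsub hbot j hj hq hsz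
    have hszpos : 0 < sizeWrt β (e.G j) :=
      BGaux.sizeWrt_pos hn hβ ((e.isGap j hj).1.isOpen' hCc.isClosed)
        (e.isGap j hj).1.nonempty' (BGaux.sizeSet_nonempty hn hβ hsub e hbot hj)
    have hlt : sizeWrt β (e.G j) < (((N + 1 : ℕ) : ℝ))⁻¹ := by
      have h := inv_strictAnti₀ hN₁pos hsz
      rwa [inv_inv] at h
    have hlt' : sInf {t | 0 < t ∧ ∃ z, e.G j ⊆ affBox β (1 / t) z} < (((N + 1 : ℕ) : ℝ))⁻¹ := by
      rw [← sizeWrt]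
      exact hlt
    obtain ⟨t, htmem, htlt⟩ :=
      exists_lt_of_csInf_lt (BGaux.sizeSet_nonempty hn hβ hsub e hbot hj) hlt'
    obtain ⟨ht0, z, hz⟩ := htmem
    apply BGaux.infDist_le_gap hn hCc (e.isGap j hj) hq hz
      (by positivity)
    intro i
    have hexp : ((N + 1 : ℕ) : ℝ) ≤ 1 / t := by
      rw [le_div_iff₀ ht0]
      have h2 := mul_lt_mul_of_pos_left htlt hN₁pos
      rw [mul_inv_cancel₀ (ne_of_gt hN₁pos)] at h2
      linarith
    have c1 : β i ^ (1 / t) ≤ bmax ^ (1 / t) := by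
      apply Real.rpow_le_rpow (hβ i).1.le (Finset.le_sup' β (Finset.mem_univ i))
      positivity
    have c2 : bmax ^ (1 / t) ≤ bmax ^ (((N + 1 : ℕ) : ℝ)) :=
      Real.rpow_le_rpow_of_exponent_ge hbmax0 hbmax1.le hexp
    have c3 : bmax ^ (((N + 1 : ℕ) : ℝ)) = bmax ^ (N + 1) := Real.rpow_natCast _ _
    rw [← c3]
    exact le_trans c1 c2
  have hb1 : infDist q C₁ ≤ 2 * bmax ^ (N + 1) := by
    apply hsmall C₁ e₁ hC₁ hsub₁ hbot₁ (u mm).1.1 hkJ hqG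
    have h := hgrow1 mm
    have hbase : 0 < (sizeWrt β (e₁.G (u 0).1.1))⁻¹ := inv_pos.2 (hpos1 _ (u 0).2.1)
    linarith
  have hb2 : infDist q C₂ ≤ 2 * bmax ^ (N + 1) := by
    apply hsmall C₂ e₂ hC₂ hsub₂ hbot₂ (u mm).1.2 hlJ hqH
    have h := hgrow2 mm
    have hbase : 0 < (sizeWrt β (e₂.G (u 0).1.2))⁻¹ := inv_pos.2 (hpos2 _ (u 0).2.2.1)
    linarith
  -- contradiction
  have hqK : q ∈ closedBall (0 : Fin n → ℝ) 1 :=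
    IsBoundedGap.subset_ball hsub₁ (e₁.isGap _ hkJ) hqG
  have hmin := isMinOn_iff.1 hx₀min q hqK
  have hfinal : δ ≤ 2 * bmax ^ (N + 1) + 2 * bmax ^ (N + 1) := by
    calc δ ≤ infDist q C₁ + infDist q C₂ := hmin
    _ ≤ _ := add_le_add hb1 hb2
  linarith
end
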